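/- arXiv:2512.20434 — 3 statements merged into one kernel-verified Lean document; each statement's English description precedes it below -/
import Mathlib

section
/- Let (G, φ) be a finite magnetic group and ρ a magnetic representation of (G, φ) on ℂⁿ. If the ℝ-algebra End_{(G,φ)}(ρ) is isomorphic as an ℝ-algebra to ℝ, to ℂ, or to the quaternions ℍ, then ρ is irreducible. -/
open Matrix

noncomputable section

/-- Entrywise complex conjugation of a complex matrix. -/
def conjMat {m n : ℕ} (M : Matrix (Fin m) (Fin n) ℂ) : Matrix (Fin m) (Fin n) ℂ :=
  M.map (starRingEnd ℂ)

/-- Entrywise complex conjugation of a vector in `ℂⁿ`. -/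
def conjVec {n : ℕ} (v : Fin n → ℂ) : Fin n → ℂ :=
  fun i => starRingEnd ℂ (v i)

/-- `σ^ε` on matrices, for `ε : ℤ/2` (written multiplicatively). -/
def sigmaPow {m n : ℕ} (ε : Multiplicative (ZMod 2)) (M : Matrix (Fin m) (Fin n) ℂ) :
    Matrix (Fin m) (Fin n) ℂ :=
  if ε = 1 then M else conjMat M

/-- `σ^ε` on vectors. -/
def sigmaPowVec {n : ℕ} (ε : Multiplicative (ZMod 2)) (v : Fin n → ℂ) : Fin n → ℂ :=
  if ε = 1 then v else conjVec v

/-- A magnetic representation of the magnetic group `(G, φ)` on `ℂⁿ`: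
`ρ (g * h) = ρ g * σ^(φ g) (ρ h)`. -/
def IsMagneticRep {G : Type*} [Group G] (φ : G →* Multiplicative (ZMod 2)) {n : ℕ}
    (ρ : G → Matrix.GeneralLinearGroup (Fin n) ℂ) : Prop :=
  ∀ g h : G, (ρ (g * h) : Matrix (Fin n) (Fin n) ℂ) =
    (ρ g : Matrix (Fin n) (Fin n) ℂ) * sigmaPow (φ g) (ρ h : Matrix (Fin n) (Fin n) ℂ)

/-- A morphism of magnetic representations from `ρ₁` to `ρ₂`. -/
def IsMagMorphism {G : Type*} [Group G] (φ : G →* Multiplicative (ZMod 2)) {n m : ℕ}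
    (ρ₁ : G → Matrix.GeneralLinearGroup (Fin n) ℂ)
    (ρ₂ : G → Matrix.GeneralLinearGroup (Fin m) ℂ)
    (T : Matrix (Fin m) (Fin n) ℂ) : Prop :=
  ∀ g : G, T * (ρ₁ g : Matrix (Fin n) (Fin n) ℂ) =
    (ρ₂ g : Matrix (Fin m) (Fin m) ℂ) * sigmaPow (φ g) T

/-- A `ℂ`-subspace invariant under a magnetic representation. -/
def MagInvariant {G : Type*} [Group G] (φ : G →* Multiplicative (ZMod 2)) {n : ℕ}
    (ρ : G → Matrix.GeneralLinearGroup (Fin n) ℂ) (W : Submodule ℂ (Fin n → ℂ)) : Prop :=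
  ∀ g : G, ∀ w ∈ W, (ρ g : Matrix (Fin n) (Fin n) ℂ).mulVec (sigmaPowVec (φ g) w) ∈ W

/-- An irreducible magnetic representation. -/
def IsIrredMagRep {G : Type*} [Group G] (φ : G →* Multiplicative (ZMod 2)) {n : ℕ}
    (ρ : G → Matrix.GeneralLinearGroup (Fin n) ℂ) : Prop :=
  (⊥ : Submodule ℂ (Fin n → ℂ)) ≠ ⊤ ∧
    ∀ W : Submodule ℂ (Fin n → ℂ), MagInvariant φ ρ W → W = ⊥ ∨ W = ⊤

/-- Irreducibility of a classical (complex linear) representation given by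
a family of invertible matrices. -/
def IsClassIrreducible {H : Type*} {n : ℕ}
    (ρ : H → Matrix.GeneralLinearGroup (Fin n) ℂ) : Prop :=
  (⊥ : Submodule ℂ (Fin n → ℂ)) ≠ ⊤ ∧
    ∀ W : Submodule ℂ (Fin n → ℂ),
      (∀ h : H, ∀ w ∈ W, (ρ h : Matrix (Fin n) (Fin n) ℂ).mulVec w ∈ W) → W = ⊥ ∨ W = ⊤

theorem sq_mem {G : Type*} [Group G] (φ : G →* Multiplicative (ZMod 2)) (a : G) :
    a * a ∈ φ.ker := by
  have h2 : ∀ x : Multiplicative (ZMod 2), x * x = 1 := by decide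
  simp [MonoidHom.mem_ker, _root_.map_mul, h2]

/-- `g ↦ a⁻¹ g a` as a map `G₀ → G₀` for `G₀ = ker φ`. -/
def kerConj {G : Type*} [Group G] (φ : G →* Multiplicative (ZMod 2)) (a : G) (g : φ.ker) :
    φ.ker :=
  ⟨a⁻¹ * g * a, by
    have hg : φ g = 1 := g.2
    simp [MonoidHom.mem_ker, _root_.map_mul, map_inv, hg]⟩

/-- Entrywise conjugation as a map `GL(n, ℂ) → GL(n, ℂ)`. -/
def conjGL {n : ℕ} (A : Matrix.GeneralLinearGroup (Fin n) ℂ) :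
    Matrix.GeneralLinearGroup (Fin n) ℂ :=
  Units.map (RingHom.toMonoidHom (RingHom.mapMatrix (starRingEnd ℂ))) A

theorem conjGL_conjGL {n : ℕ} (A : Matrix.GeneralLinearGroup (Fin n) ℂ) :
    conjGL (conjGL A) = A := by
  apply Units.ext
  ext i j
  simp [conjGL]

theorem conjMat_mul {l m n : ℕ} (M : Matrix (Fin l) (Fin m) ℂ) (N : Matrix (Fin m) (Fin n) ℂ) :
    conjMat (M * N) = conjMat M * conjMat N := by
  ext i j
  simp [conjMat, Matrix.mul_apply, map_sum]

theorem conjMat_add {m n : ℕ} (M N : Matrix (Fin m) (Fin n) ℂ) :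
    conjMat (M + N) = conjMat M + conjMat N := by
  ext i j
  simp [conjMat]

theorem sigmaPow_mul {l m n : ℕ} (ε : Multiplicative (ZMod 2))
    (M : Matrix (Fin l) (Fin m) ℂ) (N : Matrix (Fin m) (Fin n) ℂ) :
    sigmaPow ε (M * N) = sigmaPow ε M * sigmaPow ε N := by
  unfold sigmaPow
  split
  · rfl
  · exact conjMat_mul M N

theorem sigmaPow_add {m n : ℕ} (ε : Multiplicative (ZMod 2))
    (M N : Matrix (Fin m) (Fin n) ℂ) :
    sigmaPow ε (M + N) = sigmaPow ε M + sigmaPow ε N := by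
  unfold sigmaPow
  split
  · rfl
  · exact conjMat_add M N

/-- The `ℝ`-algebra of endomorphisms of a magnetic representation. -/
def MagEnd {G : Type*} [Group G] (φ : G →* Multiplicative (ZMod 2)) {n : ℕ}
    (ρ : G → Matrix.GeneralLinearGroup (Fin n) ℂ) :
    Subalgebra ℝ (Matrix (Fin n) (Fin n) ℂ) where
  carrier := {T | ∀ g : G, T * (ρ g : Matrix (Fin n) (Fin n) ℂ) =
      (ρ g : Matrix (Fin n) (Fin n) ℂ) * sigmaPow (φ g) T}
  mul_mem' := by
    intro T S hT hS g
    rw [mul_assoc, hS g, ← mul_assoc, hT g, mul_assoc, sigmaPow_mul]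
  add_mem' := by
    intro T S hT hS g
    rw [add_mul, hT g, hS g, sigmaPow_add, mul_add]
  algebraMap_mem' := by
    intro r g
    have hσ : sigmaPow (φ g) (algebraMap ℝ (Matrix (Fin n) (Fin n) ℂ) r) =
        algebraMap ℝ (Matrix (Fin n) (Fin n) ℂ) r := by
      unfold sigmaPow conjMat
      split
      · rfl
      · ext i j
        simp [Matrix.algebraMap_matrix_apply, apply_ite (starRingEnd ℂ)]
    rw [hσ, Algebra.commutes]

/-- `(n+n) × (n+n)` block matrix built out of four `n × n` blocks. -/
def blocks {n : ℕ} (A B C D : Matrix (Fin n) (Fin n) ℂ) :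
    Matrix (Fin (n + n)) (Fin (n + n)) ℂ :=
  Matrix.reindex finSumFinEquiv finSumFinEquiv (Matrix.fromBlocks A B C D)

/-- The matrix of the inclusion `ℂⁿ → ℂ^{n+n}` of the first block. -/
def iotaMat (n : ℕ) : Matrix (Fin (n + n)) (Fin n) ℂ :=
  Matrix.reindex finSumFinEquiv (Equiv.refl (Fin n))
    (Matrix.fromRows (1 : Matrix (Fin n) (Fin n) ℂ) (0 : Matrix (Fin n) (Fin n) ℂ))


-- helpers
theorem zmod2_mul_ne : ∀ a b : Multiplicative (ZMod 2), a ≠ 1 → b ≠ 1 → a * b = 1 := by decide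
theorem zmod2_inv : ∀ a : Multiplicative (ZMod 2), a⁻¹ = a := by decide

theorem conjMat_conjMat {m n : ℕ} (M : Matrix (Fin m) (Fin n) ℂ) : conjMat (conjMat M) = M := by
  ext i j; simp [conjMat]

theorem sigmaPow_comp {m n : ℕ} (a b : Multiplicative (ZMod 2)) (M : Matrix (Fin m) (Fin n) ℂ) :
    sigmaPow a (sigmaPow b M) = sigmaPow (a * b) M := by
  unfold sigmaPow
  by_cases ha : a = 1 <;> by_cases hb : b = 1
  · simp [ha, hb]
  · simp [ha, hb]
  · simp [ha, hb]
  · simp [ha, hb, zmod2_mul_ne a b ha hb, conjMat_conjMat]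

theorem sigmaPow_one_mat {n : ℕ} (ε : Multiplicative (ZMod 2)) :
    sigmaPow ε (1 : Matrix (Fin n) (Fin n) ℂ) = 1 := by
  unfold sigmaPow conjMat
  split
  · rfl
  · ext i j; simp [Matrix.one_apply, apply_ite (starRingEnd ℂ)]

theorem conjVec_conjVec {n : ℕ} (v : Fin n → ℂ) : conjVec (conjVec v) = v := by
  funext i; simp [conjVec]

theorem sigmaPowVec_comp {n : ℕ} (a b : Multiplicative (ZMod 2)) (v : Fin n → ℂ) :
    sigmaPowVec a (sigmaPowVec b v) = sigmaPowVec (a * b) v := by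
  unfold sigmaPowVec
  by_cases ha : a = 1 <;> by_cases hb : b = 1
  · simp [ha, hb]
  · simp [ha, hb]
  · simp [ha, hb]
  · simp [ha, hb, zmod2_mul_ne a b ha hb, conjVec_conjVec]

theorem sigmaPowVec_self {n : ℕ} (a : Multiplicative (ZMod 2)) (v : Fin n → ℂ) :
    sigmaPowVec a (sigmaPowVec a v) = v := by
  rw [sigmaPowVec_comp]
  have : a * a = 1 := by
    rcases eq_or_ne a 1 with h | h
    · simp [h]
    · exact zmod2_mul_ne a a h h
  rw [this]; rfl

theorem conjMat_mulVec {m n : ℕ} (M : Matrix (Fin m) (Fin n) ℂ) (v : Fin n → ℂ) :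
    (conjMat M).mulVec v = conjVec (M.mulVec (conjVec v)) := by
  funext i
  simp [conjMat, conjVec, Matrix.mulVec, dotProduct, map_sum]

theorem sigmaPow_mulVec {m n : ℕ} (ε : Multiplicative (ZMod 2)) (M : Matrix (Fin m) (Fin n) ℂ)
    (v : Fin n → ℂ) :
    (sigmaPow ε M).mulVec v = sigmaPowVec ε (M.mulVec (sigmaPowVec ε v)) := by
  unfold sigmaPow sigmaPowVec
  split
  · rfl
  · exact conjMat_mulVec M v

theorem sigmaPow_smul_real {m n : ℕ} (ε : Multiplicative (ZMod 2)) (c : ℂ)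
    (hc : starRingEnd ℂ c = c) (M : Matrix (Fin m) (Fin n) ℂ) :
    sigmaPow ε (c • M) = c • sigmaPow ε M := by
  unfold sigmaPow conjMat
  split
  · rfl
  · ext i j; simp [hc]

theorem sigmaPow_sum {m n : ℕ} {ι : Type*} (s : Finset ι) (ε : Multiplicative (ZMod 2))
    (f : ι → Matrix (Fin m) (Fin n) ℂ) :
    sigmaPow ε (∑ i ∈ s, f i) = ∑ i ∈ s, sigmaPow ε (f i) := by
  unfold sigmaPow conjMat
  split
  · rfl
  · ext i j; simp [map_sum, Finset.sum_apply, Matrix.sum_apply]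

theorem mat_ext_of_mulVec {n : ℕ} {M N : Matrix (Fin n) (Fin n) ℂ}
    (h : ∀ v, M.mulVec v = N.mulVec v) : M = N := by
  apply Matrix.toLin'.injective
  apply LinearMap.ext
  intro v
  simpa [Matrix.toLin'_apply] using h v

theorem sigmaPow_self {m n : ℕ} (a : Multiplicative (ZMod 2)) (M : Matrix (Fin m) (Fin n) ℂ) :
    sigmaPow a (sigmaPow a M) = M := by
  rw [sigmaPow_comp]
  have haa : a * a = 1 := by
    rcases eq_or_ne a 1 with h | h
    · simp [h]
    · exact zmod2_mul_ne a a h h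
  rw [haa]; rfl

theorem eq_inv_of_mul' {n : ℕ} (A : Matrix.GeneralLinearGroup (Fin n) ℂ)
    (B : Matrix (Fin n) (Fin n) ℂ) (h : (A : Matrix (Fin n) (Fin n) ℂ) * B = 1) :
    B = ((A⁻¹ : Matrix.GeneralLinearGroup (Fin n) ℂ) : Matrix (Fin n) (Fin n) ℂ) := by
  calc B = (↑A⁻¹ * ↑A) * B := by rw [A.inv_mul, one_mul]
    _ = ↑A⁻¹ * (↑A * B) := by rw [mul_assoc]
    _ = _ := by rw [h, mul_one]

theorem sum_mulVec' {n : ℕ} {ι : Type*} (s : Finset ι) (f : ι → Matrix (Fin n) (Fin n) ℂ)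
    (v : Fin n → ℂ) : (∑ i ∈ s, f i).mulVec v = ∑ i ∈ s, (f i).mulVec v := by
  classical
  induction s using Finset.induction with
  | empty => simp [Matrix.zero_mulVec]
  | insert _ _ h ih => rw [Finset.sum_insert h, Finset.sum_insert h, Matrix.add_mulVec, ih]

section RepLemmas

variable {G : Type*} [Group G] (φ : G →* Multiplicative (ZMod 2)) {n : ℕ}
  (ρ : G → Matrix.GeneralLinearGroup (Fin n) ℂ)

theorem rho_one (hρ : IsMagneticRep φ ρ) : (ρ 1 : Matrix (Fin n) (Fin n) ℂ) = 1 := by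
  have h := hρ 1 1
  rw [one_mul, _root_.map_one] at h
  have h' : (ρ 1 : Matrix (Fin n) (Fin n) ℂ) =
      (ρ 1 : Matrix (Fin n) (Fin n) ℂ) * (ρ 1 : Matrix (Fin n) (Fin n) ℂ) := by
    simpa [sigmaPow] using h
  calc (ρ 1 : Matrix (Fin n) (Fin n) ℂ)
      = (↑(ρ 1)⁻¹ * ↑(ρ 1)) * ↑(ρ 1) := by rw [(ρ 1).inv_mul, one_mul]
    _ = ↑(ρ 1)⁻¹ * (↑(ρ 1) * ↑(ρ 1)) := by rw [mul_assoc]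
    _ = ↑(ρ 1)⁻¹ * ↑(ρ 1) := by rw [← h']
    _ = 1 := (ρ 1).inv_mul

theorem sigma_rho_inv (hρ : IsMagneticRep φ ρ) (g : G) :
    sigmaPow (φ g) ((ρ g⁻¹ : Matrix.GeneralLinearGroup (Fin n) ℂ) : Matrix (Fin n) (Fin n) ℂ) =
      (((ρ g)⁻¹ : Matrix.GeneralLinearGroup (Fin n) ℂ) : Matrix (Fin n) (Fin n) ℂ) := by
  have h := hρ g g⁻¹
  rw [mul_inv_cancel, rho_one φ ρ hρ] at h
  exact eq_inv_of_mul' (ρ g) _ h.symm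

theorem sigma_inv_rel (hρ : IsMagneticRep φ ρ) (h g : G) :
    sigmaPow (φ h) (((ρ g)⁻¹ : Matrix.GeneralLinearGroup (Fin n) ℂ) : Matrix (Fin n) (Fin n) ℂ) =
      (((ρ (h * g))⁻¹ : Matrix.GeneralLinearGroup (Fin n) ℂ) : Matrix (Fin n) (Fin n) ℂ) *
        ((ρ h : Matrix.GeneralLinearGroup (Fin n) ℂ) : Matrix (Fin n) (Fin n) ℂ) := by
  have key : ((ρ (h * g) : Matrix.GeneralLinearGroup (Fin n) ℂ) : Matrix (Fin n) (Fin n) ℂ) *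
      (sigmaPow (φ h) (((ρ g)⁻¹ : Matrix.GeneralLinearGroup (Fin n) ℂ) : Matrix (Fin n) (Fin n) ℂ) *
        (((ρ h)⁻¹ : Matrix.GeneralLinearGroup (Fin n) ℂ) : Matrix (Fin n) (Fin n) ℂ)) = 1 := by
    have hmid : sigmaPow (φ h) ((ρ g : Matrix.GeneralLinearGroup (Fin n) ℂ) : Matrix (Fin n) (Fin n) ℂ) *
        (sigmaPow (φ h) (((ρ g)⁻¹ : Matrix.GeneralLinearGroup (Fin n) ℂ) : Matrix (Fin n) (Fin n) ℂ) *
          (((ρ h)⁻¹ : Matrix.GeneralLinearGroup (Fin n) ℂ) : Matrix (Fin n) (Fin n) ℂ)) =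
        (((ρ h)⁻¹ : Matrix.GeneralLinearGroup (Fin n) ℂ) : Matrix (Fin n) (Fin n) ℂ) := by
      rw [← mul_assoc, ← sigmaPow_mul, (ρ g).mul_inv, sigmaPow_one_mat, one_mul]
    rw [hρ h g, mul_assoc, hmid, (ρ h).mul_inv]
  have h2 := eq_inv_of_mul' (ρ (h * g)) _ key
  calc sigmaPow (φ h) (((ρ g)⁻¹ : Matrix.GeneralLinearGroup (Fin n) ℂ) : Matrix (Fin n) (Fin n) ℂ)
      = sigmaPow (φ h) (((ρ g)⁻¹ : Matrix.GeneralLinearGroup (Fin n) ℂ) : Matrix (Fin n) (Fin n) ℂ) *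
        ((((ρ h)⁻¹ : Matrix.GeneralLinearGroup (Fin n) ℂ) : Matrix (Fin n) (Fin n) ℂ) *
          ((ρ h : Matrix.GeneralLinearGroup (Fin n) ℂ) : Matrix (Fin n) (Fin n) ℂ)) := by
        rw [(ρ h).inv_mul, mul_one]
    _ = (sigmaPow (φ h) (((ρ g)⁻¹ : Matrix.GeneralLinearGroup (Fin n) ℂ) : Matrix (Fin n) (Fin n) ℂ) *
          (((ρ h)⁻¹ : Matrix.GeneralLinearGroup (Fin n) ℂ) : Matrix (Fin n) (Fin n) ℂ)) *
        ((ρ h : Matrix.GeneralLinearGroup (Fin n) ℂ) : Matrix (Fin n) (Fin n) ℂ) := by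
        rw [mul_assoc]
    _ = _ := by rw [h2]

theorem inv_invariant (hρ : IsMagneticRep φ ρ) {W : Submodule ℂ (Fin n → ℂ)}
    (hW : MagInvariant φ ρ W) (g : G) {w : Fin n → ℂ} (hw : w ∈ W) :
    sigmaPowVec (φ g)
      ((((ρ g)⁻¹ : Matrix.GeneralLinearGroup (Fin n) ℂ) : Matrix (Fin n) (Fin n) ℂ).mulVec w) ∈ W := by
  have hinv : ((ρ g⁻¹ : Matrix.GeneralLinearGroup (Fin n) ℂ) : Matrix (Fin n) (Fin n) ℂ) =
      sigmaPow (φ g) (((ρ g)⁻¹ : Matrix.GeneralLinearGroup (Fin n) ℂ) : Matrix (Fin n) (Fin n) ℂ) := by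
    rw [← sigma_rho_inv φ ρ hρ g, sigmaPow_self]
  have h1 := hW g⁻¹ w hw
  rw [hinv] at h1
  have hφg : φ g⁻¹ = φ g := by rw [map_inv, zmod2_inv]
  rw [hφg, sigmaPow_mulVec, sigmaPowVec_self] at h1
  exact h1

theorem idem_div {A D : Type*} [Ring A] [DivisionRing D] (e : A ≃+* D) :
    (0 : A) ≠ 1 ∧ ∀ x : A, x * x = x → x = 0 ∨ x = 1 := by
  constructor
  · intro h
    apply (one_ne_zero : (1 : D) ≠ 0)
    rw [← map_one e, ← h, map_zero]
  · intro x hx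
    have hd : e x * e x = e x := by rw [← _root_.map_mul, hx]
    rcases eq_or_ne (e x) 0 with h | h
    · left
      have : x = e.symm 0 := by rw [← h, RingEquiv.symm_apply_apply]
      simpa using this
    · right
      have h1 : e x = 1 := by
        have := mul_right_cancel₀ h (by rw [hd, one_mul] : e x * e x = 1 * e x)
        exact this
      have : x = e.symm 1 := by rw [← h1, RingEquiv.symm_apply_apply]
      simpa using this

theorem mag_schur {G : Type*} [Group G] [Finite G]
    (φ : G →* Multiplicative (ZMod 2)) {n : ℕ}
    (ρ : G → Matrix.GeneralLinearGroup (Fin n) ℂ) (hρ : IsMagneticRep φ ρ)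
    (h0 : (0 : MagEnd φ ρ) ≠ 1)
    (hid : ∀ T : MagEnd φ ρ, T * T = T → T = 0 ∨ T = 1) :
    IsIrredMagRep φ ρ := by
  constructor
  · intro hbt
    have hv : ∀ v : Fin n → ℂ, v = 0 := by
      intro v
      have : v ∈ (⊥ : Submodule ℂ (Fin n → ℂ)) := hbt ▸ Submodule.mem_top
      simpa using this
    apply h0
    apply Subtype.ext
    show (0 : Matrix (Fin n) (Fin n) ℂ) = 1
    ext i j
    have := congrFun (hv ((1 : Matrix (Fin n) (Fin n) ℂ) i)) j
    simp only [Matrix.zero_apply]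
    exact ((congrFun (hv ((1 : Matrix (Fin n) (Fin n) ℂ) i)) j).trans rfl).symm
  · intro W hW
    by_contra hcon
    push_neg at hcon
    obtain ⟨hWb, hWt⟩ := hcon
    have : Fintype G := Fintype.ofFinite G
    obtain ⟨W', hc⟩ := Submodule.exists_isCompl W
    set f : (Fin n → ℂ) →ₗ[ℂ] (Fin n → ℂ) :=
      W.subtype.comp (W.linearProjOfIsCompl W' hc) with hfdef
    set Q : Matrix (Fin n) (Fin n) ℂ := LinearMap.toMatrix' f with hQ
    have hQv : ∀ v, Q.mulVec v = f v := by
      intro v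
      rw [← Matrix.toLin'_apply, hQ, Matrix.toLin'_toMatrix']
    have hQmem : ∀ v, Q.mulVec v ∈ W := by
      intro v
      rw [hQv]
      exact (W.linearProjOfIsCompl W' hc v).2
    have hQfix : ∀ w ∈ W, Q.mulVec w = w := by
      intro w hw
      rw [hQv]
      show ((W.linearProjOfIsCompl W' hc) w : Fin n → ℂ) = w
      rw [show w = ((⟨w, hw⟩ : W) : Fin n → ℂ) from rfl]
      exact congrArg Subtype.val (Submodule.projectionOnto_apply_left hc ⟨w, hw⟩)
    set c : ℂ := (Fintype.card G : ℂ)⁻¹ with hcdef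
    have hcconj : starRingEnd ℂ c = c := by simp [hcdef]
    set F : G → Matrix (Fin n) (Fin n) ℂ := fun g =>
      (ρ g : Matrix (Fin n) (Fin n) ℂ) * sigmaPow (φ g) Q *
        (((ρ g)⁻¹ : Matrix.GeneralLinearGroup (Fin n) ℂ) : Matrix (Fin n) (Fin n) ℂ) with hF
    set P : Matrix (Fin n) (Fin n) ℂ := c • ∑ g : G, F g with hP
    have hFequi : ∀ h g : G, (ρ h : Matrix (Fin n) (Fin n) ℂ) * sigmaPow (φ h) (F g) =
        F (h * g) * (ρ h : Matrix (Fin n) (Fin n) ℂ) := by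
      intro h g
      have e1 : sigmaPow (φ h) (F g) =
          sigmaPow (φ h) ((ρ g : Matrix (Fin n) (Fin n) ℂ)) * sigmaPow (φ (h * g)) Q *
            ((((ρ (h * g))⁻¹ : Matrix.GeneralLinearGroup (Fin n) ℂ) : Matrix (Fin n) (Fin n) ℂ) *
              (ρ h : Matrix (Fin n) (Fin n) ℂ)) := by
        rw [hF]
        simp only
        rw [sigmaPow_mul, sigmaPow_mul, sigmaPow_comp, ← _root_.map_mul,
          sigma_inv_rel φ ρ hρ h g]
      rw [e1, hF]
      simp only
      rw [hρ h g]
      simp only [mul_assoc]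
    have hPmem : ∀ g : G, P * (ρ g : Matrix (Fin n) (Fin n) ℂ) =
        (ρ g : Matrix (Fin n) (Fin n) ℂ) * sigmaPow (φ g) P := by
      intro g
      have hσP : sigmaPow (φ g) P = c • ∑ g' : G, sigmaPow (φ g) (F g') := by
        rw [hP, sigmaPow_smul_real _ _ hcconj, sigmaPow_sum]
      rw [hσP, Finset.smul_sum, Finset.mul_sum]
      have hterm : ∀ g' : G, (ρ g : Matrix (Fin n) (Fin n) ℂ) * (c • sigmaPow (φ g) (F g')) =
          c • (F (g * g') * (ρ g : Matrix (Fin n) (Fin n) ℂ)) := by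
        intro g'
        rw [mul_smul_comm, hFequi g g']
      simp only [hterm]
      have hre : ∑ g' : G, c • (F (g * g') * (ρ g : Matrix (Fin n) (Fin n) ℂ)) =
          ∑ g' : G, c • (F g' * (ρ g : Matrix (Fin n) (Fin n) ℂ)) :=
        Fintype.sum_equiv (Equiv.mulLeft g) _ _ (fun x => rfl)
      rw [hre, hP]
      rw [Finset.smul_sum, Finset.sum_mul]
      simp only [smul_mul_assoc, Finset.smul_sum]
    have hFran : ∀ (g : G) (v : Fin n → ℂ), (F g).mulVec v ∈ W := by
      intro g v
      rw [hF]
      simp only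
      rw [← Matrix.mulVec_mulVec, ← Matrix.mulVec_mulVec, sigmaPow_mulVec]
      exact hW g _ (hQmem _)
    have hFfix : ∀ (g : G) (w : Fin n → ℂ), w ∈ W → (F g).mulVec w = w := by
      intro g w hw
      rw [hF]
      simp only
      rw [← Matrix.mulVec_mulVec, ← Matrix.mulVec_mulVec, sigmaPow_mulVec,
        hQfix _ (inv_invariant φ ρ hρ hW g hw), sigmaPowVec_self,
        Matrix.mulVec_mulVec, (ρ g).mul_inv, Matrix.one_mulVec]
    have hPran : ∀ v, P.mulVec v ∈ W := by
      intro v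
      rw [hP, Matrix.smul_mulVec, sum_mulVec']
      exact W.smul_mem c (W.sum_mem fun g _ => hFran g v)
    have hPfix : ∀ w ∈ W, P.mulVec w = w := by
      intro w hw
      rw [hP, Matrix.smul_mulVec, sum_mulVec']
      have : ∑ g : G, (F g).mulVec w = (Fintype.card G : ℂ) • w := by
        rw [Finset.sum_congr rfl fun g _ => hFfix g w hw]
        rw [Finset.sum_const, Finset.card_univ, Nat.cast_smul_eq_nsmul]
      rw [this, smul_smul, hcdef, inv_mul_cancel₀, one_smul]
      exact_mod_cast Nat.cast_ne_zero.mpr Fintype.card_ne_zero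
    have hidem : P * P = P := by
      apply mat_ext_of_mulVec
      intro v
      rw [← Matrix.mulVec_mulVec]
      exact hPfix _ (hPran v)
    rcases hid ⟨P, hPmem⟩ (Subtype.ext hidem) with hz | ho
    · obtain ⟨w, hw, hwne⟩ := (Submodule.ne_bot_iff W).mp hWb
      have hP0 : P = 0 := congrArg Subtype.val hz
      exact hwne (by rw [← hPfix w hw, hP0, Matrix.zero_mulVec])
    · have hP1 : P = 1 := congrArg Subtype.val ho
      have hex : ∃ x, x ∉ W := by
        by_contra hx
        push_neg at hx
        exact hWt (Submodule.eq_top_iff'.mpr hx)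
      obtain ⟨x, hx⟩ := hex
      apply hx
      have := hPran x
      rwa [hP1, Matrix.one_mulVec] at this

end RepLemmas

theorem stmt14 {G : Type*} [Group G] [Finite G]
    (φ : G →* Multiplicative (ZMod 2)) (hφ : Function.Surjective φ) {n : ℕ}
    (ρ : G → Matrix.GeneralLinearGroup (Fin n) ℂ) (hρ : IsMagneticRep φ ρ)
    (h : Nonempty (MagEnd φ ρ ≃ₐ[ℝ] ℝ) ∨ Nonempty (MagEnd φ ρ ≃ₐ[ℝ] ℂ) ∨
      Nonempty (MagEnd φ ρ ≃ₐ[ℝ] Quaternion ℝ)) :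
    IsIrredMagRep φ ρ := by
  rcases h with ⟨⟨e⟩⟩ | ⟨⟨e⟩⟩ | ⟨⟨e⟩⟩
  · obtain ⟨h0, hid⟩ := idem_div e.toRingEquiv
    exact mag_schur φ ρ hρ (fun hh => h0 hh) hid
  · obtain ⟨h0, hid⟩ := idem_div e.toRingEquiv
    exact mag_schur φ ρ hρ (fun hh => h0 hh) hid
  · obtain ⟨h0, hid⟩ := idem_div e.toRingEquiv
    exact mag_schur φ ρ hρ (fun hh => h0 hh) hid
end
end

section
/- (Wigner classification, real case.) Let G be a finite group, φ : G → ℤ/2 a surjective group homomorphism with kernel G₀, a ∈ G ∖ G₀, and ρ : G₀ → GL(n, ℂ) an irreducible group homomorphism with conjugate representation ρ*(g) = σ(ρ(a⁻¹ g a)). Suppose T ∈ GL(n, ℂ) satisfies T · ρ*(g) = ρ(g) · T for all g ∈ G₀ and T · σ(T) = ρ(a²). Then there exists a unique magnetic representation ρ̂ of (G, φ) on ℂⁿ with ρ̂(g) = ρ(g) for all g ∈ G₀ and ρ̂(a) = T, and ρ̂ is irreducible. -/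
open Matrix

noncomputable section

theorem stmt15 {G : Type*} [Group G] [Finite G]
    (φ : G →* Multiplicative (ZMod 2)) (hφ : Function.Surjective φ)
    (a : G) (ha : a ∉ φ.ker) {n : ℕ}
    (ρ : φ.ker →* Matrix.GeneralLinearGroup (Fin n) ℂ)
    (hirr : IsClassIrreducible fun g : φ.ker => ρ g)
    (T : Matrix.GeneralLinearGroup (Fin n) ℂ)
    (hTiso : ∀ g : φ.ker,
      (T : Matrix (Fin n) (Fin n) ℂ) * conjMat (ρ (kerConj φ a g) : Matrix (Fin n) (Fin n) ℂ) =
        (ρ g : Matrix (Fin n) (Fin n) ℂ) * (T : Matrix (Fin n) (Fin n) ℂ))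
    (hTT : (T : Matrix (Fin n) (Fin n) ℂ) * conjMat (T : Matrix (Fin n) (Fin n) ℂ) =
      (ρ ⟨a * a, sq_mem φ a⟩ : Matrix (Fin n) (Fin n) ℂ)) :
    ∃ ρhat : G → Matrix.GeneralLinearGroup (Fin n) ℂ,
      (IsMagneticRep φ ρhat ∧ (∀ g : φ.ker, ρhat g = ρ g) ∧ ρhat a = T ∧
        IsIrredMagRep φ ρhat) ∧
      ∀ ρ' : G → Matrix.GeneralLinearGroup (Fin n) ℂ,
        IsMagneticRep φ ρ' → (∀ g : φ.ker, ρ' g = ρ g) → ρ' a = T → ρ' = ρhat := by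
  classical
  have hker2 : ∀ x y : Multiplicative (ZMod 2), x ≠ 1 → y ≠ 1 → x * y = 1 := by decide
  have hinv : ∀ x : Multiplicative (ZMod 2), x⁻¹ = x := by decide
  have mem1 : ∀ g : G, g ∉ φ.ker → g * a⁻¹ ∈ φ.ker := by
    intro g hg
    rw [MonoidHom.mem_ker] at *
    rw [_root_.map_mul, _root_.map_inv, hinv]
    exact hker2 _ _ hg (fun h => ha (MonoidHom.mem_ker.mpr h))
  have memconj : ∀ h : G, h ∈ φ.ker → a * h * a⁻¹ ∈ φ.ker := by
    intro h hh
    rw [MonoidHom.mem_ker] at *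
    simp [_root_.map_mul, _root_.map_inv, hh]
  -- basic ρ facts on matrices
  have hρeq : ∀ (x y : G) (hx : x ∈ φ.ker) (hy : y ∈ φ.ker), x = y →
      (ρ ⟨x, hx⟩ : Matrix (Fin n) (Fin n) ℂ) = (ρ ⟨y, hy⟩ : Matrix (Fin n) (Fin n) ℂ) := by
    intro x y hx hy hxy; subst hxy; rfl
  have hρmul : ∀ (x y : G) (hx : x ∈ φ.ker) (hy : y ∈ φ.ker),
      (ρ ⟨x * y, mul_mem hx hy⟩ : Matrix (Fin n) (Fin n) ℂ) =
        (ρ ⟨x, hx⟩ : Matrix (Fin n) (Fin n) ℂ) * (ρ ⟨y, hy⟩ : Matrix (Fin n) (Fin n) ℂ) := by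
    intro x y hx hy
    have : (⟨x * y, mul_mem hx hy⟩ : φ.ker) = ⟨x, hx⟩ * ⟨y, hy⟩ := rfl
    rw [this, _root_.map_mul ρ, Units.val_mul]
  have hσ1 : ∀ {g : G}, g ∈ φ.ker → ∀ {m' : ℕ} (M : Matrix (Fin n) (Fin m') ℂ),
      sigmaPow (φ g) M = M := by
    intro g hg m' M
    rw [sigmaPow, if_pos (MonoidHom.mem_ker.mp hg)]
  have hσc : ∀ {g : G}, g ∉ φ.ker → ∀ {m' : ℕ} (M : Matrix (Fin n) (Fin m') ℂ),
      sigmaPow (φ g) M = conjMat M := by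
    intro g hg m' M
    rw [sigmaPow, if_neg (fun h => hg (MonoidHom.mem_ker.mpr h))]
  -- key intertwining relation
  have hconjM : ∀ (h : G) (hh : h ∈ φ.ker),
      (T : Matrix (Fin n) (Fin n) ℂ) * conjMat (ρ ⟨h, hh⟩ : Matrix (Fin n) (Fin n) ℂ) =
        (ρ ⟨a * h * a⁻¹, memconj h hh⟩ : Matrix (Fin n) (Fin n) ℂ) *
          (T : Matrix (Fin n) (Fin n) ℂ) := by
    intro h hh
    have key := hTiso ⟨a * h * a⁻¹, memconj h hh⟩
    have hk : kerConj φ a ⟨a * h * a⁻¹, memconj h hh⟩ = ⟨h, hh⟩ := by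
      apply Subtype.ext
      show a⁻¹ * (a * h * a⁻¹) * a = h
      group
    rwa [hk] at key
  refine ⟨fun g => if hg : g ∈ φ.ker then ρ ⟨g, hg⟩ else ρ ⟨g * a⁻¹, mem1 g hg⟩ * T,
    ⟨?_, ?_, ?_, ?_⟩, ?_⟩
  · -- magnetic rep
    intro g h
    dsimp only
    by_cases hg : g ∈ φ.ker <;> by_cases hh : h ∈ φ.ker
    · have hgh : g * h ∈ φ.ker := mul_mem hg hh
      rw [dif_pos hg, dif_pos hh, dif_pos hgh, hσ1 hg]
      exact (hρeq _ _ hgh (mul_mem hg hh) rfl).trans (hρmul _ _ hg hh)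
    · have hgh : g * h ∉ φ.ker := by
        intro hm
        exact hh (by simpa using mul_mem (inv_mem hg) hm)
      rw [dif_pos hg, dif_neg hh, dif_neg hgh, hσ1 hg]
      simp only [Units.val_mul, ← mul_assoc]
      congr 1
      rw [← hρmul _ _ hg (mem1 h hh)]
      exact hρeq _ _ _ _ (by group)
    · have hgh : g * h ∉ φ.ker := by
        intro hm
        exact hg (by simpa using mul_mem hm (inv_mem hh))
      rw [dif_neg hg, dif_pos hh, dif_neg hgh, hσc hg]
      simp only [Units.val_mul, mul_assoc]
      rw [hconjM h hh]
      simp only [← mul_assoc]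
      congr 1
      rw [← hρmul _ _ (mem1 g hg) (memconj h hh)]
      exact hρeq _ _ _ _ (by group)
    · have hgh : g * h ∈ φ.ker := by
        rw [MonoidHom.mem_ker, _root_.map_mul]
        exact hker2 _ _ (fun h' => hg (MonoidHom.mem_ker.mpr h')) (fun h' => hh (MonoidHom.mem_ker.mpr h'))
      rw [dif_neg hg, dif_neg hh, dif_pos hgh, hσc hg, Units.val_mul, Units.val_mul,
        conjMat_mul]
      symm
      calc ((ρ ⟨g * a⁻¹, mem1 g hg⟩ : Matrix (Fin n) (Fin n) ℂ) *
              (T : Matrix (Fin n) (Fin n) ℂ)) *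
            (conjMat (ρ ⟨h * a⁻¹, mem1 h hh⟩ : Matrix (Fin n) (Fin n) ℂ) *
              conjMat (T : Matrix (Fin n) (Fin n) ℂ))
          = (ρ ⟨g * a⁻¹, mem1 g hg⟩ : Matrix (Fin n) (Fin n) ℂ) *
              (((T : Matrix (Fin n) (Fin n) ℂ) *
                conjMat (ρ ⟨h * a⁻¹, mem1 h hh⟩ : Matrix (Fin n) (Fin n) ℂ)) *
                conjMat (T : Matrix (Fin n) (Fin n) ℂ)) := by
            simp only [mul_assoc]
        _ = (ρ ⟨g * a⁻¹, mem1 g hg⟩ : Matrix (Fin n) (Fin n) ℂ) *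
              ((ρ ⟨a * (h * a⁻¹) * a⁻¹, memconj _ (mem1 h hh)⟩ : Matrix (Fin n) (Fin n) ℂ) *
                (ρ ⟨a * a, sq_mem φ a⟩ : Matrix (Fin n) (Fin n) ℂ)) := by
            rw [hconjM _ (mem1 h hh), mul_assoc, hTT]
        _ = (ρ ⟨g * h, hgh⟩ : Matrix (Fin n) (Fin n) ℂ) := by
            rw [← hρmul _ _ (memconj _ (mem1 h hh)) (sq_mem φ a),
              ← hρmul _ _ (mem1 g hg) (mul_mem (memconj _ (mem1 h hh)) (sq_mem φ a))]
            exact hρeq _ _ _ _ (by group)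
  · intro g
    dsimp only
    rw [dif_pos g.2]
  · have h1 : (⟨a * a⁻¹, mem1 a ha⟩ : φ.ker) = 1 := Subtype.ext (by simp)
    dsimp only
    rw [dif_neg ha, h1, _root_.map_one, one_mul]
  · refine ⟨hirr.1, fun W hW => hirr.2 W ?_⟩
    intro h w hw
    have := hW (↑h) w hw
    dsimp only at this
    rw [dif_pos h.2] at this
    rwa [show sigmaPowVec (φ ↑h) w = w from by rw [sigmaPowVec, if_pos (MonoidHom.mem_ker.mp h.2)]]
      at this
  · intro ρ' hρ' h2 h3
    funext g
    by_cases hg : g ∈ φ.ker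
    · rw [dif_pos hg]
      exact h2 ⟨g, hg⟩
    · apply Units.ext
      have h1 := hρ' (g * a⁻¹) a
      rw [show g * a⁻¹ * a = g from by group] at h1
      rw [h1, dif_neg hg, Units.val_mul, hσ1 (mem1 g hg), h3]
      congr 1
      rw [show (ρ' (g * a⁻¹) : Matrix (Fin n) (Fin n) ℂ) =
        ((ρ' ↑(⟨g * a⁻¹, mem1 g hg⟩ : φ.ker)) : Matrix (Fin n) (Fin n) ℂ) from rfl,
        h2 ⟨g * a⁻¹, mem1 g hg⟩]
end
end

section
/- (Wigner classification, quaternionic case.) Let G be a finite group, φ : G → ℤ/2 a surjective group homomorphism with kernel G₀, a ∈ G ∖ G₀, and ρ : G₀ → GL(n, ℂ) an irreducible group homomorphism with conjugate representation ρ*(g) = σ(ρ(a⁻¹ g a)). Suppose T ∈ GL(n, ℂ) satisfies T · ρ*(g) = ρ(g) · T for all g ∈ G₀ and T · σ(T) = −ρ(a²). Then there exists a unique magnetic representation ρ̂ of (G, φ) on ℂ^{2n} with ρ̂(g) = diag(ρ(g), ρ(g)) for all g ∈ G₀ and ρ̂(a) = [[0, −T], [T, 0]] (block form); moreover ρ̂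 is irreducible and End_{(G,φ)}(ρ̂) is isomorphic to the quaternions ℍ as an ℝ-algebra. -/
open Matrix

noncomputable section

namespace Wig

variable {n : ℕ}

theorem blocks_mul (A B C D A' B' C' D' : Matrix (Fin n) (Fin n) ℂ) :
    blocks A B C D * blocks A' B' C' D' =
      blocks (A*A'+B*C') (A*B'+B*D') (C*A'+D*C') (C*B'+D*D') := by
  simp only [blocks, Matrix.reindex_apply]
  rw [Matrix.submatrix_mul_equiv _ _ _ finSumFinEquiv.symm _, Matrix.fromBlocks_multiply]

theorem blocks_one : blocks (1 : Matrix (Fin n) (Fin n) ℂ) 0 0 1 = 1 := by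
  simp only [blocks, Matrix.fromBlocks_one, Matrix.reindex_apply, Matrix.submatrix_one_equiv]

theorem blocks_add (A B C D A' B' C' D' : Matrix (Fin n) (Fin n) ℂ) :
    blocks A B C D + blocks A' B' C' D' = blocks (A+A') (B+B') (C+C') (D+D') := by
  ext k l
  simp only [blocks, Matrix.reindex_apply, Matrix.submatrix_apply, Matrix.add_apply]
  rcases finSumFinEquiv.symm k with i | i <;> rcases finSumFinEquiv.symm l with j | j <;> simp

theorem blocks_smul {S : Type*} [SMul S ℂ] (c : S) (A B C D : Matrix (Fin n) (Fin n) ℂ) :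
    c • blocks A B C D = blocks (c • A) (c • B) (c • C) (c • D) := by
  ext k l
  simp only [blocks, Matrix.reindex_apply, Matrix.submatrix_apply, Matrix.smul_apply]
  rcases finSumFinEquiv.symm k with i | i <;> rcases finSumFinEquiv.symm l with j | j <;> simp

theorem blocks_neg (A B C D : Matrix (Fin n) (Fin n) ℂ) :
    - blocks A B C D = blocks (-A) (-B) (-C) (-D) := by
  ext k l
  simp only [blocks, Matrix.reindex_apply, Matrix.submatrix_apply, Matrix.neg_apply]
  rcases finSumFinEquiv.symm k with i | i <;> rcases finSumFinEquiv.symm l with j | j <;> simp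

theorem conjMat_blocks (A B C D : Matrix (Fin n) (Fin n) ℂ) :
    conjMat (blocks A B C D) =
      blocks (conjMat A) (conjMat B) (conjMat C) (conjMat D) := by
  ext k l
  simp only [blocks, conjMat, Matrix.reindex_apply, Matrix.submatrix_apply, Matrix.map_apply]
  rcases finSumFinEquiv.symm k with i | i <;> rcases finSumFinEquiv.symm l with j | j <;> simp

/-- inverse of `blocks`. -/
def unblk (M : Matrix (Fin (n+n)) (Fin (n+n)) ℂ) :
    Matrix (Fin n ⊕ Fin n) (Fin n ⊕ Fin n) ℂ :=
  Matrix.reindex finSumFinEquiv.symm finSumFinEquiv.symm M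

theorem blocks_unblk (M : Matrix (Fin (n+n)) (Fin (n+n)) ℂ) :
    blocks (unblk M).toBlocks₁₁ (unblk M).toBlocks₁₂ (unblk M).toBlocks₂₁
      (unblk M).toBlocks₂₂ = M := by
  simp [blocks, unblk, Matrix.fromBlocks_toBlocks]

theorem unblk_blocks (A B C D : Matrix (Fin n) (Fin n) ℂ) :
    unblk (blocks A B C D) = Matrix.fromBlocks A B C D := by
  simp [blocks, unblk]

theorem blocks_inj {A B C D A' B' C' D' : Matrix (Fin n) (Fin n) ℂ}
    (h : blocks A B C D = blocks A' B' C' D') :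
    A = A' ∧ B = B' ∧ C = C' ∧ D = D' := by
  have h2 := congrArg unblk h
  rw [unblk_blocks, unblk_blocks] at h2
  refine ⟨?_, ?_, ?_, ?_⟩
  · exact congrArg Matrix.toBlocks₁₁ h2
  · exact congrArg Matrix.toBlocks₁₂ h2
  · exact congrArg Matrix.toBlocks₂₁ h2
  · exact congrArg Matrix.toBlocks₂₂ h2

/-- pairing of two vectors into a block vector -/
def pair (x y : Fin n → ℂ) : Fin (n+n) → ℂ := Sum.elim x y ∘ finSumFinEquiv.symm

def p1 (v : Fin (n+n) → ℂ) : Fin n → ℂ := fun i => v (finSumFinEquiv (Sum.inl i))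
def p2 (v : Fin (n+n) → ℂ) : Fin n → ℂ := fun i => v (finSumFinEquiv (Sum.inr i))

@[simp] theorem pair_inl (x y : Fin n → ℂ) (i : Fin n) :
    pair x y (finSumFinEquiv (Sum.inl i)) = x i := by
  simp only [pair, Function.comp_apply, Equiv.symm_apply_apply, Sum.elim_inl]

@[simp] theorem pair_inr (x y : Fin n → ℂ) (i : Fin n) :
    pair x y (finSumFinEquiv (Sum.inr i)) = y i := by
  simp only [pair, Function.comp_apply, Equiv.symm_apply_apply, Sum.elim_inr]

@[simp] theorem p1_pair (x y : Fin n → ℂ) : p1 (pair x y) = x := by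
  funext i; simp only [p1, pair_inl]

@[simp] theorem p2_pair (x y : Fin n → ℂ) : p2 (pair x y) = y := by
  funext i; simp only [p2, pair_inr]

theorem pair_p1_p2 (v : Fin (n+n) → ℂ) : pair (p1 v) (p2 v) = v := by
  funext k
  have : ∀ s : Fin n ⊕ Fin n, Sum.elim (p1 v) (p2 v) s = v (finSumFinEquiv s) := by
    rintro (i | i) <;> rfl
  have h2 := this (finSumFinEquiv.symm k)
  rw [Equiv.apply_symm_apply] at h2
  rw [← h2]; rfl

theorem pair_add (x y x' y' : Fin n → ℂ) :
    pair x y + pair x' y' = pair (x + x') (y + y') := by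
  funext k
  have : ∀ s : Fin n ⊕ Fin n,
      (pair x y + pair x' y') (finSumFinEquiv s) = pair (x+x') (y+y') (finSumFinEquiv s) := by
    rintro (i | i) <;>
      simp only [Pi.add_apply, pair_inl, pair_inr]
  have h2 := this (finSumFinEquiv.symm k)
  rwa [Equiv.apply_symm_apply] at h2

theorem pair_eq_zero_iff {x y : Fin n → ℂ} : pair x y = 0 ↔ x = 0 ∧ y = 0 := by
  constructor
  · intro h
    constructor
    · funext i; have h2 := congrFun h (finSumFinEquiv (Sum.inl i))
      rw [pair_inl] at h2; exact h2
    · funext i; have h2 := congrFun h (finSumFinEquiv (Sum.inr i))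
      rw [pair_inr] at h2; exact h2
  · rintro ⟨rfl, rfl⟩
    funext k
    have : ∀ s : Fin n ⊕ Fin n, pair (0 : Fin n → ℂ) 0 (finSumFinEquiv s) = 0 := by
      rintro (i | i) <;> simp only [pair_inl, pair_inr, Pi.zero_apply]
    have h2 := this (finSumFinEquiv.symm k)
    rw [Equiv.apply_symm_apply] at h2
    exact h2

theorem conjVec_pair (x y : Fin n → ℂ) :
    conjVec (pair x y) = pair (conjVec x) (conjVec y) := by
  funext k
  have : ∀ s : Fin n ⊕ Fin n,
      conjVec (pair x y) (finSumFinEquiv s) = pair (conjVec x) (conjVec y) (finSumFinEquiv s) := by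
    rintro (i | i) <;>
      simp only [conjVec, pair_inl, pair_inr]
  have h2 := this (finSumFinEquiv.symm k)
  rwa [Equiv.apply_symm_apply] at h2

theorem blocks_mulVec (A B C D : Matrix (Fin n) (Fin n) ℂ) (x y : Fin n → ℂ) :
    (blocks A B C D) *ᵥ (pair x y) = pair (A *ᵥ x + B *ᵥ y) (C *ᵥ x + D *ᵥ y) := by
  simp only [blocks, Matrix.reindex_apply]
  rw [Matrix.submatrix_mulVec_equiv _ _ _ finSumFinEquiv.symm]
  have h1 : pair x y ∘ ⇑finSumFinEquiv.symm.symm = Sum.elim x y := by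
    funext s; rcases s with i | i <;>
      simp only [Function.comp_apply, Equiv.symm_symm, pair_inl, pair_inr, Sum.elim_inl, Sum.elim_inr]
  rw [h1, Matrix.fromBlocks_mulVec]
  rfl

theorem conjMat_one : conjMat (1 : Matrix (Fin n) (Fin n) ℂ) = 1 := by
  ext i j
  simp [conjMat, Matrix.one_apply, apply_ite (starRingEnd ℂ)]

theorem conjMat_zero : conjMat (0 : Matrix (Fin n) (Fin n) ℂ) = 0 := by
  ext i j; simp [conjMat]

theorem conjMat_neg (M : Matrix (Fin n) (Fin n) ℂ) : conjMat (-M) = -conjMat M := by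
  ext i j; simp [conjMat]

theorem conjMat_smul (c : ℂ) (M : Matrix (Fin n) (Fin n) ℂ) :
    conjMat (c • M) = (starRingEnd ℂ c) • conjMat M := by
  ext i j; simp [conjMat]

theorem smul_one_mul (c : ℂ) (M : Matrix (Fin n) (Fin n) ℂ) :
    (c • (1 : Matrix (Fin n) (Fin n) ℂ)) * M = c • M := by
  rw [Matrix.smul_mul, one_mul]

theorem mul_smul_one (c : ℂ) (M : Matrix (Fin n) (Fin n) ℂ) :
    M * (c • (1 : Matrix (Fin n) (Fin n) ℂ)) = c • M := by
  rw [Matrix.mul_smul, mul_one]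

/-- Schur's lemma for matrix representations. -/
theorem schur {H : Type*} (ρ : H → Matrix.GeneralLinearGroup (Fin n) ℂ)
    (hirr : IsClassIrreducible ρ) (S : Matrix (Fin n) (Fin n) ℂ)
    (hS : ∀ g : H, S * (ρ g : Matrix (Fin n) (Fin n) ℂ) =
      (ρ g : Matrix (Fin n) (Fin n) ℂ) * S) :
    ∃ c : ℂ, S = c • 1 := by
  have hnt : Nontrivial (Fin n → ℂ) := by
    by_contra hn
    rw [not_nontrivial_iff_subsingleton] at hn
    exact hirr.1 (Subsingleton.elim _ _)
  obtain ⟨c, hc⟩ := Module.End.exists_eigenvalue (Matrix.mulVecLin S)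
  obtain ⟨v, hv⟩ := hc.exists_hasEigenvector
  refine ⟨c, ?_⟩
  set W : Submodule ℂ (Fin n → ℂ) :=
    LinearMap.ker (Matrix.mulVecLin S - c • LinearMap.id) with hWdef
  have hmem : ∀ w : Fin n → ℂ, w ∈ W ↔ S *ᵥ w = c • w := by
    intro w
    rw [hWdef, LinearMap.mem_ker, LinearMap.sub_apply, LinearMap.smul_apply,
      LinearMap.id_apply, sub_eq_zero, Matrix.mulVecLin_apply]
  have hWinv : ∀ h : H, ∀ w ∈ W, (ρ h : Matrix (Fin n) (Fin n) ℂ) *ᵥ w ∈ W := by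
    intro h w hw
    rw [hmem] at hw ⊢
    rw [Matrix.mulVec_mulVec, hS h, ← Matrix.mulVec_mulVec, hw, Matrix.mulVec_smul]
  have hWbot : W ≠ ⊥ := by
    rw [Submodule.ne_bot_iff]
    refine ⟨v, ?_, hv.2⟩
    rw [hmem]
    exact Module.End.mem_eigenspace_iff.mp hv.1
  have hWtop : W = ⊤ := (hirr.2 W hWinv).resolve_left hWbot
  have hall : ∀ w : Fin n → ℂ, S *ᵥ w = c • w := by
    intro w
    rw [← hmem, hWtop]
    exact Submodule.mem_top
  ext i j
  have := congrFun (hall (Pi.single j 1)) i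
  rw [Matrix.mulVec_single] at this
  simpa [Matrix.one_apply, Pi.single_apply, apply_ite (c * ·), mul_comm] using this

theorem conjVec_conjVec (v : Fin n → ℂ) : conjVec (conjVec v) = v := by
  funext i; simp [conjVec]

theorem conjVec_zero : conjVec (0 : Fin n → ℂ) = 0 := by
  funext i; simp [conjVec]

theorem conjVec_smul (c : ℂ) (v : Fin n → ℂ) :
    conjVec (c • v) = (starRingEnd ℂ c) • conjVec v := by
  funext i; simp [conjVec]

theorem pair_smul (c : ℂ) (x y : Fin n → ℂ) :
    c • pair x y = pair (c • x) (c • y) := by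
  funext k
  have : ∀ s : Fin n ⊕ Fin n,
      (c • pair x y) (finSumFinEquiv s) = pair (c • x) (c • y) (finSumFinEquiv s) := by
    rintro (i | i) <;> simp only [Pi.smul_apply, pair_inl, pair_inr]
  have h2 := this (finSumFinEquiv.symm k)
  rwa [Equiv.apply_symm_apply] at h2

/-- `p1` as a linear map. -/
def p1L : (Fin (n+n) → ℂ) →ₗ[ℂ] (Fin n → ℂ) where
  toFun := p1
  map_add' := fun _ _ => rfl
  map_smul' := fun _ _ => rfl

/-- `p2` as a linear map. -/
def p2L : (Fin (n+n) → ℂ) →ₗ[ℂ] (Fin n → ℂ) where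
  toFun := p2
  map_add' := fun _ _ => rfl
  map_smul' := fun _ _ => rfl

/-- `x ↦ pair x 0` as a linear map. -/
def pairL1 : (Fin n → ℂ) →ₗ[ℂ] (Fin (n+n) → ℂ) where
  toFun := fun x => pair x 0
  map_add' := by
    intro x y
    rw [pair_add, add_zero]
  map_smul' := by
    intro c x
    rw [RingHom.id_apply, pair_smul, smul_zero]

/-- `y ↦ pair 0 y` as a linear map. -/
def pairL2 : (Fin n → ℂ) →ₗ[ℂ] (Fin (n+n) → ℂ) where
  toFun := fun y => pair 0 y
  map_add' := by
    intro x y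
    rw [pair_add, add_zero]
  map_smul' := by
    intro c x
    rw [RingHom.id_apply, pair_smul, smul_zero]

theorem ext_mulVec {M N : Matrix (Fin n) (Fin n) ℂ} (h : ∀ x, M *ᵥ x = N *ᵥ x) :
    M = N := by
  ext i j
  have := congrFun (h (Pi.single j 1)) i
  simpa using this

theorem nontriv_of_irr {H : Type*} {ρ : H → Matrix.GeneralLinearGroup (Fin n) ℂ}
    (hirr : IsClassIrreducible ρ) : Nontrivial (Fin n → ℂ) := by
  by_contra hn
  rw [not_nontrivial_iff_subsingleton] at hn
  exact hirr.1 (Subsingleton.elim _ _)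

theorem p1_blocks_mulVec (A B C D : Matrix (Fin n) (Fin n) ℂ) (w : Fin (n+n) → ℂ) :
    p1 (blocks A B C D *ᵥ w) = A *ᵥ p1 w + B *ᵥ p2 w := by
  conv_lhs => rw [← pair_p1_p2 w]
  rw [blocks_mulVec, p1_pair]

theorem p2_blocks_mulVec (A B C D : Matrix (Fin n) (Fin n) ℂ) (w : Fin (n+n) → ℂ) :
    p2 (blocks A B C D *ᵥ w) = C *ᵥ p1 w + D *ᵥ p2 w := by
  conv_lhs => rw [← pair_p1_p2 w]
  rw [blocks_mulVec, p2_pair]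

theorem mag_irred_aux {H : Type*} (ρ : H → Matrix.GeneralLinearGroup (Fin n) ℂ)
    (hirr : IsClassIrreducible ρ)
    (Tm Ti : Matrix (Fin n) (Fin n) ℂ) (hTi : Ti * Tm = 1) (hTi2 : Tm * Ti = 1)
    (W : Submodule ℂ (Fin (n+n) → ℂ))
    (h0 : ∀ h : H, ∀ w ∈ W,
      (blocks (ρ h : Matrix (Fin n) (Fin n) ℂ) 0 0 (ρ h : Matrix (Fin n) (Fin n) ℂ)) *ᵥ w ∈ W)
    (hA : ∀ w ∈ W, (blocks 0 (-Tm) Tm 0) *ᵥ (conjVec w) ∈ W)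
    (hW : W ≠ ⊥) : W = ⊤ := by
  have hnt : Nontrivial (Fin n → ℂ) := nontriv_of_irr hirr
  -- if both coordinate families lie in W, then W = ⊤
  have hTop : (∀ x, pair x 0 ∈ W) → (∀ y, pair 0 y ∈ W) → W = ⊤ := by
    intro h1 h2
    rw [Submodule.eq_top_iff']
    intro v
    have : pair (p1 v) 0 + pair 0 (p2 v) = v := by
      rw [pair_add, add_zero, zero_add, pair_p1_p2]
    rw [← this]
    exact W.add_mem (h1 _) (h2 _)
  have hI1 : (∀ x, pair x 0 ∈ W) → (∀ y, pair 0 y ∈ W) := by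
    intro h1 y
    have hm := hA (pair (conjVec (Ti *ᵥ y)) 0) (h1 _)
    have key : blocks 0 (-Tm) Tm 0 *ᵥ conjVec (pair (conjVec (Ti *ᵥ y)) 0) = pair 0 y := by
      rw [conjVec_pair, conjVec_conjVec, conjVec_zero, blocks_mulVec]
      simp [Matrix.mulVec_mulVec, hTi2]
    rwa [key] at hm
  have hI2 : (∀ y, pair 0 y ∈ W) → (∀ x, pair x 0 ∈ W) := by
    intro h2 x
    have hm := hA (pair 0 (conjVec (Ti *ᵥ (-x)))) (h2 _)
    have key : blocks 0 (-Tm) Tm 0 *ᵥ conjVec (pair 0 (conjVec (Ti *ᵥ (-x)))) = pair x 0 := by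
      rw [conjVec_pair, conjVec_conjVec, conjVec_zero, blocks_mulVec]
      simp [Matrix.mulVec_mulVec, Matrix.neg_mul, hTi2, Matrix.neg_mulVec]
    rwa [key] at hm
  -- the coordinate subspaces
  set U₁ : Submodule ℂ (Fin n → ℂ) := W.comap pairL1 with hU₁def
  set U₂ : Submodule ℂ (Fin n → ℂ) := W.comap pairL2 with hU₂def
  have hU₁mem : ∀ x, x ∈ U₁ ↔ pair x 0 ∈ W := fun x => Iff.rfl
  have hU₂mem : ∀ y, y ∈ U₂ ↔ pair 0 y ∈ W := fun y => Iff.rfl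
  have hU₁inv : ∀ h : H, ∀ x ∈ U₁, (ρ h : Matrix (Fin n) (Fin n) ℂ) *ᵥ x ∈ U₁ := by
    intro h x hx
    rw [hU₁mem] at hx ⊢
    have := h0 h _ hx
    rwa [blocks_mulVec, Matrix.mulVec_zero, Matrix.zero_mulVec, Matrix.mulVec_zero,
      add_zero, add_zero] at this
  have hU₂inv : ∀ h : H, ∀ y ∈ U₂, (ρ h : Matrix (Fin n) (Fin n) ℂ) *ᵥ y ∈ U₂ := by
    intro h y hy
    rw [hU₂mem] at hy ⊢
    have := h0 h _ hy
    rwa [blocks_mulVec, Matrix.mulVec_zero, Matrix.zero_mulVec, Matrix.mulVec_zero,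
      zero_add, zero_add] at this
  rcases hirr.2 U₁ hU₁inv with hU₁ | hU₁
  · rcases hirr.2 U₂ hU₂inv with hU₂ | hU₂
    · -- both trivial: the graph case, leads to a contradiction
      exfalso
      have hx0 : ∀ x, pair x 0 ∈ W → x = 0 := by
        intro x hx
        have : x ∈ U₁ := (hU₁mem x).mpr hx
        rwa [hU₁, Submodule.mem_bot] at this
      have hy0 : ∀ y, pair 0 y ∈ W → y = 0 := by
        intro y hy
        have : y ∈ U₂ := (hU₂mem y).mpr hy
        rwa [hU₂, Submodule.mem_bot] at this
      have huniq : ∀ w ∈ W, ∀ w' ∈ W, p1 w = p1 w' → w = w' := by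
        intro w hw w' hw' hp
        have hsub : w - w' ∈ W := W.sub_mem hw hw'
        have hp1 : p1 (w - w') = 0 := by
          funext i; simp only [p1, Pi.sub_apply, Pi.zero_apply]
          have := congrFun hp i
          simp only [p1] at this
          rw [this, sub_self]
        have hrepr : pair (0 : Fin n → ℂ) (p2 (w - w')) = w - w' := by
          rw [← hp1, pair_p1_p2]
        have : p2 (w - w') = 0 := hy0 _ (by rw [hrepr]; exact hsub)
        have : w - w' = 0 := by
          rw [← hrepr, this]
          exact pair_eq_zero_iff.mpr ⟨rfl, rfl⟩
        exact sub_eq_zero.mp this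
      -- W projects isomorphically to the first factor
      set Φ : W →ₗ[ℂ] (Fin n → ℂ) := p1L.comp W.subtype with hΦdef
      have hΦinj : Function.Injective Φ := by
        intro w w' hww
        exact Subtype.ext (huniq w.1 w.2 w'.1 w'.2 hww)
      have hΦsurj : Function.Surjective Φ := by
        set W₁ : Submodule ℂ (Fin n → ℂ) := W.map p1L with hW₁def
        have hW₁inv : ∀ h : H, ∀ x ∈ W₁, (ρ h : Matrix (Fin n) (Fin n) ℂ) *ᵥ x ∈ W₁ := by
          intro h x hx
          rw [hW₁def, Submodule.mem_map] at hx ⊢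
          obtain ⟨w, hw, hwx⟩ := hx
          refine ⟨blocks ((ρ h : Matrix (Fin n) (Fin n) ℂ)) 0 0
            ((ρ h : Matrix (Fin n) (Fin n) ℂ)) *ᵥ w, h0 h w hw, ?_⟩
          have hgoal : p1 (blocks ((ρ h : Matrix (Fin n) (Fin n) ℂ)) 0 0
              ((ρ h : Matrix (Fin n) (Fin n) ℂ)) *ᵥ w) = (ρ h : Matrix (Fin n) (Fin n) ℂ) *ᵥ x := by
            rw [p1_blocks_mulVec, Matrix.zero_mulVec, add_zero,
              show p1 w = x from hwx]
          exact hgoal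
        have hW₁ne : W₁ ≠ ⊥ := by
          intro hbot
          apply hW
          rw [Submodule.eq_bot_iff]
          intro w hw
          have hp1w : p1 w = 0 := by
            have : p1L w ∈ W₁ := Submodule.mem_map_of_mem hw
            rwa [hbot, Submodule.mem_bot] at this
          have hrepr : pair 0 (p2 w) = w := by rw [← hp1w, pair_p1_p2]
          have h2 : p2 w = 0 := hy0 _ (by rw [hrepr]; exact hw)
          rw [← hrepr, h2]
          exact pair_eq_zero_iff.mpr ⟨rfl, rfl⟩
        have hW₁top : W₁ = ⊤ := (hirr.2 W₁ hW₁inv).resolve_left hW₁ne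
        intro x
        have hx : x ∈ W₁ := by rw [hW₁top]; exact Submodule.mem_top
        rw [hW₁def, Submodule.mem_map] at hx
        obtain ⟨w, hw, hwx⟩ := hx
        exact ⟨⟨w, hw⟩, hwx⟩
      set e := LinearEquiv.ofBijective Φ ⟨hΦinj, hΦsurj⟩ with hedef
      set SL : (Fin n → ℂ) →ₗ[ℂ] (Fin n → ℂ) :=
        p2L.comp (W.subtype.comp (e.symm : (Fin n → ℂ) →ₗ[ℂ] W)) with hSLdef
      have hkey : ∀ x, pair x (SL x) ∈ W := by
        intro x
        have h1 : p1 ((e.symm x : W) : Fin (n+n) → ℂ) = x := by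
          have h2 := e.apply_symm_apply x
          exact h2
        have h3 : pair (p1 ((e.symm x : W) : Fin (n+n) → ℂ))
            (p2 ((e.symm x : W) : Fin (n+n) → ℂ)) ∈ W := by
          rw [pair_p1_p2]
          exact (e.symm x).2
        rw [h1] at h3
        exact h3
      have huniq2 : ∀ x y, pair x y ∈ W → y = SL x := by
        intro x y hxy
        have h4 := huniq _ hxy _ (hkey x) (by rw [p1_pair, p1_pair])
        have h5 := congrArg p2 h4
        rwa [p2_pair, p2_pair] at h5
      set Smat := LinearMap.toMatrix' SL with hSmatdef
      have hSmul : ∀ x, Smat *ᵥ x = SL x := by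
        intro x
        rw [hSmatdef, ← Matrix.toLin'_apply, Matrix.toLin'_toMatrix']
      have hcomm : ∀ h : H, Smat * (ρ h : Matrix (Fin n) (Fin n) ℂ) =
          (ρ h : Matrix (Fin n) (Fin n) ℂ) * Smat := by
        intro h
        apply ext_mulVec
        intro x
        rw [← Matrix.mulVec_mulVec, ← Matrix.mulVec_mulVec, hSmul, hSmul]
        have hin := h0 h _ (hkey x)
        rw [blocks_mulVec, Matrix.zero_mulVec, Matrix.zero_mulVec, add_zero, zero_add] at hin
        exact (huniq2 _ _ hin).symm
      obtain ⟨c, hc⟩ := schur ρ hirr Smat hcomm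
      have hSLx : ∀ x, SL x = c • x := by
        intro x
        rw [← hSmul, hc, Matrix.smul_mulVec, Matrix.one_mulVec]
      obtain ⟨y₀, hy₀⟩ := exists_ne (0 : Fin n → ℂ)
      have hTy : Tm *ᵥ y₀ ≠ 0 := by
        intro hz
        apply hy₀
        have h6 := congrArg (fun v => Ti *ᵥ v) hz
        simpa [Matrix.mulVec_mulVec, hTi, Matrix.one_mulVec, Matrix.mulVec_zero] using h6
      have hmem := hA _ (hkey (conjVec y₀))
      have hvec : blocks 0 (-Tm) Tm 0 *ᵥ conjVec (pair (conjVec y₀) (SL (conjVec y₀)))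
          = pair (-((starRingEnd ℂ c) • (Tm *ᵥ y₀))) (Tm *ᵥ y₀) := by
        rw [hSLx, conjVec_pair, conjVec_smul, conjVec_conjVec, blocks_mulVec]
        simp [Matrix.zero_mulVec, Matrix.mulVec_smul, Matrix.neg_mulVec]
      rw [hvec] at hmem
      have h7 := huniq2 _ _ hmem
      rw [hSLx] at h7
      rw [smul_neg, smul_smul] at h7
      have hfin : (1 + c * starRingEnd ℂ c) • (Tm *ᵥ y₀) = 0 := by
        rw [add_smul, one_smul]
        nth_rewrite 1 [h7]
        exact neg_add_cancel _
      have hcc : (1 + c * starRingEnd ℂ c) = 0 := by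
        rcases smul_eq_zero.mp hfin with h8 | h8
        · exact h8
        · exact absurd h8 hTy
      rw [Complex.mul_conj] at hcc
      have h9 := congrArg Complex.re hcc
      simp only [Complex.add_re, Complex.one_re, Complex.ofReal_re, Complex.zero_re] at h9
      nlinarith [Complex.normSq_nonneg c]
    · have h2 : ∀ y, pair 0 y ∈ W := fun y =>
        (hU₂mem y).mp (by rw [hU₂]; exact Submodule.mem_top)
      exact hTop (hI2 h2) h2
  · have h1 : ∀ x, pair x 0 ∈ W := fun x =>
      (hU₁mem x).mp (by rw [hU₁]; exact Submodule.mem_top)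
    exact hTop h1 (hI1 h1)

theorem mag_end_aux {H : Type*} (ρ : H → Matrix.GeneralLinearGroup (Fin n) ℂ)
    (hirr : IsClassIrreducible ρ)
    (Tm Ti : Matrix (Fin n) (Fin n) ℂ) (hTi : Ti * Tm = 1) (hTi2 : Tm * Ti = 1)
    (S : Matrix (Fin (n+n)) (Fin (n+n)) ℂ)
    (h0 : ∀ h : H, S * blocks ((ρ h : Matrix (Fin n) (Fin n) ℂ)) 0 0
        ((ρ h : Matrix (Fin n) (Fin n) ℂ)) =
      blocks ((ρ h : Matrix (Fin n) (Fin n) ℂ)) 0 0 ((ρ h : Matrix (Fin n) (Fin n) ℂ)) * S)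
    (hA : S * blocks 0 (-Tm) Tm 0 = blocks 0 (-Tm) Tm 0 * conjMat S) :
    ∃ α β : ℂ, S = blocks (α • 1) (β • 1) ((-(starRingEnd ℂ β)) • 1)
      ((starRingEnd ℂ α) • 1) := by
  have hnt : Nontrivial (Fin n → ℂ) := nontriv_of_irr hirr
  obtain ⟨y₀, hy₀⟩ := exists_ne (0 : Fin n → ℂ)
  have hTy : Tm *ᵥ y₀ ≠ 0 := by
    intro hz
    apply hy₀
    have h6 := congrArg (fun v => Ti *ᵥ v) hz
    simpa [Matrix.mulVec_mulVec, hTi, Matrix.one_mulVec, Matrix.mulVec_zero] using h6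
  have hsmulinj : ∀ u v : ℂ, u • Tm = v • Tm → u = v := by
    intro u v huv
    have h7 := congrArg (fun M => M *ᵥ y₀) huv
    simp only [Matrix.smul_mulVec] at h7
    exact smul_left_injective ℂ hTy h7
  set A := (unblk S).toBlocks₁₁ with hAdef
  set B := (unblk S).toBlocks₁₂ with hBdef
  set C := (unblk S).toBlocks₂₁ with hCdef
  set D := (unblk S).toBlocks₂₂ with hDdef
  have hS : S = blocks A B C D := (blocks_unblk S).symm
  -- commutation with the diagonal part
  have hblk : ∀ h : H, A * (ρ h : Matrix (Fin n) (Fin n) ℂ) =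
        (ρ h : Matrix (Fin n) (Fin n) ℂ) * A ∧
      B * (ρ h : Matrix (Fin n) (Fin n) ℂ) = (ρ h : Matrix (Fin n) (Fin n) ℂ) * B ∧
      C * (ρ h : Matrix (Fin n) (Fin n) ℂ) = (ρ h : Matrix (Fin n) (Fin n) ℂ) * C ∧
      D * (ρ h : Matrix (Fin n) (Fin n) ℂ) = (ρ h : Matrix (Fin n) (Fin n) ℂ) * D := by
    intro h
    have h8 := h0 h
    rw [hS, blocks_mul, blocks_mul] at h8
    have h9 := blocks_inj h8
    refine ⟨by have := h9.1; simpa using this, by have := h9.2.1; simpa using this,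
      by have := h9.2.2.1; simpa using this, by have := h9.2.2.2; simpa using this⟩
  obtain ⟨α, hα⟩ := schur ρ hirr A (fun h => (hblk h).1)
  obtain ⟨β, hβ⟩ := schur ρ hirr B (fun h => (hblk h).2.1)
  obtain ⟨γ, hγ⟩ := schur ρ hirr C (fun h => (hblk h).2.2.1)
  obtain ⟨δ, hδ⟩ := schur ρ hirr D (fun h => (hblk h).2.2.2)
  -- the condition coming from the antiunitary part
  rw [hS, hα, hβ, hγ, hδ] at hA
  rw [conjMat_blocks, conjMat_smul, conjMat_smul, conjMat_smul, conjMat_smul, conjMat_one,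
    blocks_mul, blocks_mul] at hA
  have h10 := blocks_inj hA
  have h11 : β = -(starRingEnd ℂ γ) := by
    apply hsmulinj
    have h := h10.1
    rw [Matrix.mul_zero, zero_add, smul_one_mul, Matrix.zero_mul, zero_add, mul_smul_one,
      smul_neg, ← neg_smul] at h
    exact h
  have h12 : -α = -(starRingEnd ℂ δ) := by
    apply hsmulinj
    have h := h10.2.1
    rw [Matrix.mul_zero, add_zero, Matrix.zero_mul, zero_add, smul_one_mul, mul_smul_one,
      smul_neg, smul_neg, ← neg_smul, ← neg_smul] at h
    exact h
  have hγβ : γ = -(starRingEnd ℂ β) := by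
    have h13 := congrArg (starRingEnd ℂ) h11
    rw [map_neg, Complex.conj_conj] at h13
    linear_combination h13
  have hδα : δ = starRingEnd ℂ α := by
    have h14 : α = starRingEnd ℂ δ := neg_injective h12
    have h15 := congrArg (starRingEnd ℂ) h14
    rw [Complex.conj_conj] at h15
    exact h15.symm
  exact ⟨α, β, by rw [hS, hα, hβ, hγ, hδ, hγβ, hδα]⟩

end Wig


set_option maxHeartbeats 2000000 in
open Wig in
theorem stmt17 {G : Type*} [Group G] [Finite G]
    (φ : G →* Multiplicative (ZMod 2)) (hφ : Function.Surjective φ)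
    (a : G) (ha : a ∉ φ.ker) {n : ℕ}
    (ρ : φ.ker →* Matrix.GeneralLinearGroup (Fin n) ℂ)
    (hirr : IsClassIrreducible fun g : φ.ker => ρ g)
    (T : Matrix.GeneralLinearGroup (Fin n) ℂ)
    (hTiso : ∀ g : φ.ker,
      (T : Matrix (Fin n) (Fin n) ℂ) * conjMat (ρ (kerConj φ a g) : Matrix (Fin n) (Fin n) ℂ) =
        (ρ g : Matrix (Fin n) (Fin n) ℂ) * (T : Matrix (Fin n) (Fin n) ℂ))
    (hTT : (T : Matrix (Fin n) (Fin n) ℂ) * conjMat (T : Matrix (Fin n) (Fin n) ℂ) =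
      -(ρ ⟨a * a, sq_mem φ a⟩ : Matrix (Fin n) (Fin n) ℂ)) :
    ∃ ρhat : G → Matrix.GeneralLinearGroup (Fin (n + n)) ℂ,
      (IsMagneticRep φ ρhat ∧
        (∀ g : φ.ker, (ρhat g : Matrix (Fin (n + n)) (Fin (n + n)) ℂ) =
          blocks (ρ g : Matrix (Fin n) (Fin n) ℂ) 0 0 (ρ g : Matrix (Fin n) (Fin n) ℂ)) ∧
        (ρhat a : Matrix (Fin (n + n)) (Fin (n + n)) ℂ) =
          blocks 0 (-(T : Matrix (Fin n) (Fin n) ℂ)) (T : Matrix (Fin n) (Fin n) ℂ) 0 ∧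
        IsIrredMagRep φ ρhat ∧
        Nonempty (MagEnd φ ρhat ≃ₐ[ℝ] Quaternion ℝ)) ∧
      ∀ ρ' : G → Matrix.GeneralLinearGroup (Fin (n + n)) ℂ,
        IsMagneticRep φ ρ' →
        (∀ g : φ.ker, (ρ' g : Matrix (Fin (n + n)) (Fin (n + n)) ℂ) =
          blocks (ρ g : Matrix (Fin n) (Fin n) ℂ) 0 0 (ρ g : Matrix (Fin n) (Fin n) ℂ)) →
        (ρ' a : Matrix (Fin (n + n)) (Fin (n + n)) ℂ) =
          blocks 0 (-(T : Matrix (Fin n) (Fin n) ℂ)) (T : Matrix (Fin n) (Fin n) ℂ) 0 →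
        ρ' = ρhat := by
  classical
  -- ZMod 2 facts
  have hZ : ∀ x y : Multiplicative (ZMod 2), x ≠ 1 → y ≠ 1 → x = y := by decide
  have hZsq : ∀ x : Multiplicative (ZMod 2), x * x = 1 := by decide
  have hphia : φ a ≠ 1 := fun h => ha (MonoidHom.mem_ker.mpr h)
  have hnotker : ∀ g : G, g ∉ φ.ker → φ g ≠ 1 := fun g hg h => hg (MonoidHom.mem_ker.mpr h)
  have hmul_inv_mem : ∀ g : G, g ∉ φ.ker → g * a⁻¹ ∈ φ.ker := by
    intro g hg
    rw [MonoidHom.mem_ker, _root_.map_mul, _root_.map_inv, show φ g = φ a from hZ _ _ (hnotker g hg) hphia,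
      mul_inv_cancel]
  have hsq_mem' : ∀ g h : G, g ∉ φ.ker → h ∉ φ.ker → g * h ∈ φ.ker := by
    intro g h hg hh
    rw [MonoidHom.mem_ker, _root_.map_mul, show φ g = φ h from hZ _ _ (hnotker _ hg) (hnotker _ hh),
      hZsq]
  have hmulker_not : ∀ g h : G, g ∈ φ.ker → h ∉ φ.ker → g * h ∉ φ.ker := by
    intro g h hg hh hmem
    apply hh
    have h2 := mul_mem (inv_mem hg) hmem
    rwa [← mul_assoc, inv_mul_cancel, one_mul] at h2
  have hnotker_mulker : ∀ g h : G, g ∉ φ.ker → h ∈ φ.ker → g * h ∉ φ.ker := by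
    intro g h hg hh hmem
    apply hg
    have h2 := mul_mem hmem (inv_mem hh)
    rwa [mul_assoc, mul_inv_cancel, mul_one] at h2
  have hconj_mem : ∀ h : φ.ker, a * (h : G) * a⁻¹ ∈ φ.ker := by
    intro h
    have hh := h.2
    rw [MonoidHom.mem_ker] at hh ⊢
    rw [_root_.map_mul, _root_.map_mul, hh, mul_one, _root_.map_inv, mul_inv_cancel]
  -- sigmaPow facts
  have hsig1 : ∀ (g : G), g ∈ φ.ker → ∀ M : Matrix (Fin (n+n)) (Fin (n+n)) ℂ,
      sigmaPow (φ g) M = M := by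
    intro g hg M
    rw [MonoidHom.mem_ker] at hg
    unfold sigmaPow
    rw [if_pos hg]
  have hsig2 : ∀ (g : G), g ∉ φ.ker → ∀ M : Matrix (Fin (n+n)) (Fin (n+n)) ℂ,
      sigmaPow (φ g) M = conjMat M := by
    intro g hg M
    unfold sigmaPow
    rw [if_neg (hnotker g hg)]
  have hsigv1 : ∀ (g : G), g ∈ φ.ker → ∀ v : Fin (n+n) → ℂ, sigmaPowVec (φ g) v = v := by
    intro g hg v
    rw [MonoidHom.mem_ker] at hg
    unfold sigmaPowVec
    rw [if_pos hg]
  have hsigv2 : ∀ (g : G), g ∉ φ.ker → ∀ v : Fin (n+n) → ℂ,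
      sigmaPowVec (φ g) v = conjVec v := by
    intro g hg v
    unfold sigmaPowVec
    rw [if_neg (hnotker g hg)]
  -- matrices
  set Tm : Matrix (Fin n) (Fin n) ℂ := (T : Matrix (Fin n) (Fin n) ℂ) with hTmdef
  set Ti : Matrix (Fin n) (Fin n) ℂ :=
    ((T⁻¹ : Matrix.GeneralLinearGroup (Fin n) ℂ) : Matrix (Fin n) (Fin n) ℂ) with hTidef
  have hTi : Ti * Tm = 1 := T.inv_mul
  have hTi2 : Tm * Ti = 1 := T.mul_inv
  set Jm : Matrix (Fin (n+n)) (Fin (n+n)) ℂ := blocks 0 (-Tm) Tm 0 with hJmdef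
  set Jinv : Matrix (Fin (n+n)) (Fin (n+n)) ℂ := blocks 0 Ti (-Ti) 0 with hJinvdef
  set Dm : Matrix (Fin n) (Fin n) ℂ → Matrix (Fin (n+n)) (Fin (n+n)) ℂ :=
    fun M => blocks M 0 0 M with hDmdef
  have hDm_mul : ∀ M N, Dm M * Dm N = Dm (M * N) := by
    intro M N
    simp only [hDmdef]
    rw [Wig.blocks_mul]
    simp only [Matrix.mul_zero, Matrix.zero_mul, add_zero, zero_add]
  have hDm_one : Dm 1 = 1 := Wig.blocks_one
  have hDm_conj : ∀ M, conjMat (Dm M) = Dm (conjMat M) := by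
    intro M
    simp only [hDmdef]
    rw [Wig.conjMat_blocks, Wig.conjMat_zero]
  have hJJ1 : Jm * Jinv = 1 := by
    rw [hJmdef, hJinvdef, Wig.blocks_mul]
    simp only [Matrix.mul_zero, Matrix.zero_mul, Matrix.neg_mul, Matrix.mul_neg, neg_neg,
      neg_zero, add_zero, zero_add, hTi2]
    exact Wig.blocks_one
  have hJJ2 : Jinv * Jm = 1 := by
    rw [hJmdef, hJinvdef, Wig.blocks_mul]
    simp only [Matrix.mul_zero, Matrix.zero_mul, Matrix.neg_mul, Matrix.mul_neg, neg_neg,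
      neg_zero, add_zero, zero_add, hTi]
    exact Wig.blocks_one
  -- the candidate
  set f : G → Matrix (Fin (n + n)) (Fin (n + n)) ℂ := fun g =>
    if hg : g ∈ φ.ker then Dm ((ρ ⟨g, hg⟩ : Matrix (Fin n) (Fin n) ℂ))
    else Dm ((ρ ⟨g * a⁻¹, hmul_inv_mem g hg⟩ : Matrix (Fin n) (Fin n) ℂ)) * Jm with hfdef
  set finv : G → Matrix (Fin (n + n)) (Fin (n + n)) ℂ := fun g =>
    if hg : g ∈ φ.ker then
      Dm ((((ρ ⟨g, hg⟩)⁻¹ : Matrix.GeneralLinearGroup (Fin n) ℂ) : Matrix (Fin n) (Fin n) ℂ))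
    else Jinv * Dm ((((ρ ⟨g * a⁻¹, hmul_inv_mem g hg⟩)⁻¹ :
      Matrix.GeneralLinearGroup (Fin n) ℂ) : Matrix (Fin n) (Fin n) ℂ)) with hfinvdef
  have hfk : ∀ (g : G) (hg : g ∈ φ.ker),
      f g = Dm ((ρ ⟨g, hg⟩ : Matrix (Fin n) (Fin n) ℂ)) := by
    intro g hg
    simp only [hfdef]
    rw [dif_pos hg]
  have hfn : ∀ (g : G) (hg : g ∉ φ.ker),
      f g = Dm ((ρ ⟨g * a⁻¹, hmul_inv_mem g hg⟩ : Matrix (Fin n) (Fin n) ℂ)) * Jm := by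
    intro g hg
    simp only [hfdef]
    rw [dif_neg hg]
  have hf1 : ∀ g, f g * finv g = 1 := by
    intro g
    by_cases hg : g ∈ φ.ker
    · simp only [hfdef, hfinvdef]
      rw [dif_pos hg, dif_pos hg, hDm_mul, Units.mul_inv, hDm_one]
    · simp only [hfdef, hfinvdef]
      rw [dif_neg hg, dif_neg hg, mul_assoc, ← mul_assoc Jm, hJJ1, one_mul, hDm_mul,
        Units.mul_inv, hDm_one]
  have hf2 : ∀ g, finv g * f g = 1 := by
    intro g
    by_cases hg : g ∈ φ.ker
    · simp only [hfdef, hfinvdef]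
      rw [dif_pos hg, dif_pos hg, hDm_mul, Units.inv_mul, hDm_one]
    · simp only [hfdef, hfinvdef]
      rw [dif_neg hg, dif_neg hg, mul_assoc, ← mul_assoc _ (Dm _) Jm, hDm_mul,
        Units.inv_mul, hDm_one, one_mul, hJJ2]
  set ρhat : G → Matrix.GeneralLinearGroup (Fin (n + n)) ℂ :=
    fun g => ⟨f g, finv g, hf1 g, hf2 g⟩ with hrhatdef
  have hval : ∀ g : G, (ρhat g : Matrix (Fin (n+n)) (Fin (n+n)) ℂ) = f g := fun g => rfl
  have hval0 : ∀ g : φ.ker, (ρhat (g : G) : Matrix (Fin (n+n)) (Fin (n+n)) ℂ) =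
      Dm ((ρ g : Matrix (Fin n) (Fin n) ℂ)) := by
    intro g
    rw [hval, hfk _ g.2]
  have hvala : (ρhat a : Matrix (Fin (n+n)) (Fin (n+n)) ℂ) = Jm := by
    rw [hval, hfn _ ha]
    have h1 : (⟨a * a⁻¹, hmul_inv_mem a ha⟩ : φ.ker) = 1 := Subtype.ext (mul_inv_cancel a)
    rw [h1, _root_.map_one, Units.val_one, hDm_one, one_mul]
  -- multiplicativity helper
  have hρmul : ∀ (x y z : G) (hx : x ∈ φ.ker) (hy : y ∈ φ.ker) (hz : z ∈ φ.ker),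
      z = x * y → (ρ ⟨z, hz⟩ : Matrix (Fin n) (Fin n) ℂ) =
        (ρ ⟨x, hx⟩ : Matrix (Fin n) (Fin n) ℂ) * (ρ ⟨y, hy⟩ : Matrix (Fin n) (Fin n) ℂ) := by
    intro x y z hx hy hz hzxy
    subst hzxy
    have h1 : (⟨x * y, hz⟩ : φ.ker) = ⟨x, hx⟩ * ⟨y, hy⟩ := rfl
    rw [h1, _root_.map_mul, Units.val_mul]
  -- key relations
  have hK1 : ∀ h : φ.ker,
      Jm * Dm (conjMat ((ρ h : Matrix (Fin n) (Fin n) ℂ))) =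
        Dm ((ρ ⟨a * (h : G) * a⁻¹, hconj_mem h⟩ : Matrix (Fin n) (Fin n) ℂ)) * Jm := by
    intro h
    have hkc : kerConj φ a ⟨a * (h : G) * a⁻¹, hconj_mem h⟩ = h := by
      apply Subtype.ext
      show a⁻¹ * (a * (h : G) * a⁻¹) * a = (h : G)
      group
    have hTR := hTiso ⟨a * (h : G) * a⁻¹, hconj_mem h⟩
    rw [hkc] at hTR
    simp only [hDmdef, hJmdef]
    rw [Wig.blocks_mul, Wig.blocks_mul]
    simp only [Matrix.zero_mul, Matrix.mul_zero, Matrix.neg_mul, Matrix.mul_neg, neg_zero,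
      add_zero, zero_add, hTR]
  have hK2 : Jm * conjMat Jm =
      Dm ((ρ ⟨a * a, sq_mem φ a⟩ : Matrix (Fin n) (Fin n) ℂ)) := by
    simp only [hJmdef, hDmdef]
    rw [Wig.conjMat_blocks, Wig.conjMat_zero, Wig.conjMat_neg, Wig.blocks_mul]
    simp only [Matrix.zero_mul, Matrix.mul_zero, Matrix.neg_mul, Matrix.mul_neg, neg_zero,
      add_zero, zero_add, neg_neg, hTT]
  -- the magnetic representation property
  have hmag : IsMagneticRep φ ρhat := by
    intro g h
    by_cases hg : g ∈ φ.ker <;> by_cases hh : h ∈ φ.ker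
    · have hgh : g * h ∈ φ.ker := mul_mem hg hh
      rw [hval, hval, hval, hsig1 g hg, hfk _ hgh, hfk _ hg, hfk _ hh, hDm_mul,
        hρmul g h (g*h) hg hh hgh rfl]
    · have hgh : g * h ∉ φ.ker := hmulker_not g h hg hh
      rw [hval, hval, hval, hsig1 g hg, hfn _ hgh, hfk _ hg, hfn _ hh, ← mul_assoc, hDm_mul,
        hρmul g (h * a⁻¹) (g * h * a⁻¹) hg (hmul_inv_mem h hh) (hmul_inv_mem _ hgh)
          (by group)]
    · have hgh : g * h ∉ φ.ker := hnotker_mulker g h hg hh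
      rw [hval, hval, hval, hsig2 g hg, hfn _ hgh, hfn _ hg, hfk _ hh, hDm_conj]
      conv_rhs => rw [mul_assoc, hK1 ⟨h, hh⟩, ← mul_assoc, hDm_mul]
      rw [hρmul (g * a⁻¹) (a * ((⟨h, hh⟩ : φ.ker) : G) * a⁻¹) (g * h * a⁻¹)
        (hmul_inv_mem g hg) (hconj_mem ⟨h, hh⟩) (hmul_inv_mem _ hgh)
        (by show g * h * a⁻¹ = (g * a⁻¹) * (a * h * a⁻¹); group)]
    · have hgh : g * h ∈ φ.ker := hsq_mem' g h hg hh
      rw [hval, hval, hval, hsig2 g hg, hfk _ hgh, hfn _ hg, hfn _ hh, conjMat_mul, hDm_conj]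
      conv_rhs => rw [mul_assoc, ← mul_assoc Jm, hK1 ⟨h * a⁻¹, hmul_inv_mem h hh⟩,
        mul_assoc _ Jm, hK2, ← mul_assoc, hDm_mul, hDm_mul]
      rw [hρmul ((g * a⁻¹) * (a * ((⟨h * a⁻¹, hmul_inv_mem h hh⟩ : φ.ker) : G) * a⁻¹))
          (a * a) (g * h)
          (mul_mem (hmul_inv_mem g hg) (hconj_mem ⟨h * a⁻¹, hmul_inv_mem h hh⟩))
          (sq_mem φ a) hgh
          (by show g * h = (g * a⁻¹) * (a * (h * a⁻¹) * a⁻¹) * (a * a); group),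
        hρmul (g * a⁻¹) (a * ((⟨h * a⁻¹, hmul_inv_mem h hh⟩ : φ.ker) : G) * a⁻¹) _
          (hmul_inv_mem g hg) (hconj_mem ⟨h * a⁻¹, hmul_inv_mem h hh⟩) _ rfl]
  have hdiag : ∀ g : φ.ker, (ρhat (g : G) : Matrix (Fin (n + n)) (Fin (n + n)) ℂ) =
      blocks (ρ g : Matrix (Fin n) (Fin n) ℂ) 0 0 (ρ g : Matrix (Fin n) (Fin n) ℂ) :=
    fun g => hval0 g
  have hJa : (ρhat a : Matrix (Fin (n + n)) (Fin (n + n)) ℂ) =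
      blocks 0 (-(T : Matrix (Fin n) (Fin n) ℂ)) (T : Matrix (Fin n) (Fin n) ℂ) 0 := hvala
  have hnt1 : Nontrivial (Fin n → ℂ) := Wig.nontriv_of_irr hirr
  have hi0 : Nonempty (Fin n) := by
    by_contra hne
    have hss : Subsingleton (Fin n → ℂ) := ⟨fun f g => funext fun i => absurd ⟨i⟩ hne⟩
    exact not_nontrivial_iff_subsingleton.mpr hss hnt1
  obtain ⟨i0⟩ := hi0
  have hirr2 : IsIrredMagRep φ ρhat := by
    constructor
    · intro heq
      have h2 : (Pi.single (Fin.castAdd n i0) (1:ℂ) : Fin (n+n) → ℂ) ∈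
          (⊥ : Submodule ℂ (Fin (n+n) → ℂ)) := by rw [heq]; exact Submodule.mem_top
      rw [Submodule.mem_bot] at h2
      have h3 := congrFun h2 (Fin.castAdd n i0)
      simp at h3
    · intro W hWinv
      by_cases hWb : W = ⊥
      · exact Or.inl hWb
      · refine Or.inr (Wig.mag_irred_aux (fun g : φ.ker => ρ g) hirr Tm Ti hTi hTi2 W ?_ ?_ hWb)
        · intro h w hw
          have h4 := hWinv (↑h) w hw
          rw [hval0 h, hsigv1 _ h.2] at h4
          exact h4
        · intro w hw
          have h4 := hWinv a w hw
          rw [hvala, hsigv2 _ ha] at h4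
          exact h4
  have hquat : Nonempty (MagEnd φ ρhat ≃ₐ[ℝ] Quaternion ℝ) := by
    -- membership characterization
    have hmem : ∀ S : Matrix (Fin (n+n)) (Fin (n+n)) ℂ, S ∈ MagEnd φ ρhat ↔
        ((∀ h : φ.ker, S * Dm ((ρ h : Matrix (Fin n) (Fin n) ℂ)) =
            Dm ((ρ h : Matrix (Fin n) (Fin n) ℂ)) * S) ∧
          S * Jm = Jm * conjMat S) := by
      intro S
      constructor
      · intro hS
        constructor
        · intro h
          have h1 := hS (↑h : G)
          rw [hval0 h, hsig1 _ h.2] at h1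
          exact h1
        · have h1 := hS a
          rw [hvala, hsig2 _ ha] at h1
          exact h1
      · rintro ⟨h1, h2⟩ g
        by_cases hg : g ∈ φ.ker
        · rw [hval, hfk _ hg, hsig1 _ hg]
          exact h1 ⟨g, hg⟩
        · rw [hval, hfn _ hg, hsig2 _ hg, ← mul_assoc, h1 ⟨g * a⁻¹, hmul_inv_mem g hg⟩,
            mul_assoc, h2, ← mul_assoc]
    -- conjugation facts for scalar blocks
    have hcI : conjMat (Complex.I • (1 : Matrix (Fin n) (Fin n) ℂ)) = (-Complex.I) • 1 := by
      rw [Wig.conjMat_smul, Wig.conjMat_one, Complex.conj_I]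
    have hcI' : conjMat ((-Complex.I) • (1 : Matrix (Fin n) (Fin n) ℂ)) = Complex.I • 1 := by
      rw [Wig.conjMat_smul, Wig.conjMat_one, map_neg, Complex.conj_I, neg_neg]
    have hcone : conjMat (1 : Matrix (Fin n) (Fin n) ℂ) = 1 := Wig.conjMat_one
    have hcnegone : conjMat (-1 : Matrix (Fin n) (Fin n) ℂ) = -1 := by
      rw [Wig.conjMat_neg, Wig.conjMat_one]
    -- the quaternionic generators
    set qI : Matrix (Fin (n+n)) (Fin (n+n)) ℂ :=
      blocks (Complex.I • 1) 0 0 ((-Complex.I) • 1) with hqI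
    set qJ : Matrix (Fin (n+n)) (Fin (n+n)) ℂ := blocks 0 1 (-1) 0 with hqJ
    set qK : Matrix (Fin (n+n)) (Fin (n+n)) ℂ :=
      blocks 0 (Complex.I • 1) (Complex.I • 1) 0 with hqK
    have hqImem : qI ∈ MagEnd φ ρhat := by
      rw [hmem]
      constructor
      · intro h
        simp only [hqI, hDmdef]
        rw [Wig.blocks_mul, Wig.blocks_mul]
        simp only [Matrix.zero_mul, Matrix.mul_zero, add_zero, zero_add,
          Wig.smul_one_mul, Wig.mul_smul_one]
      · simp only [hqI, hJmdef]
        rw [Wig.conjMat_blocks, Wig.conjMat_zero, hcI, hcI', Wig.blocks_mul, Wig.blocks_mul]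
        simp only [Matrix.zero_mul, Matrix.mul_zero, add_zero, zero_add, Matrix.one_mul,
          Matrix.mul_one, smul_zero, Wig.smul_one_mul, Wig.mul_smul_one, Matrix.mul_neg,
          Matrix.neg_mul, smul_neg, neg_smul, neg_neg, neg_zero]
    have hqJmem : qJ ∈ MagEnd φ ρhat := by
      rw [hmem]
      constructor
      · intro h
        simp only [hqJ, hDmdef]
        rw [Wig.blocks_mul, Wig.blocks_mul]
        simp only [Matrix.zero_mul, Matrix.mul_zero, add_zero, zero_add, Matrix.one_mul,
          Matrix.mul_one, Matrix.neg_mul, Matrix.mul_neg, neg_zero]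
      · simp only [hqJ, hJmdef]
        rw [Wig.conjMat_blocks, Wig.conjMat_zero, hcone, hcnegone, Wig.blocks_mul,
          Wig.blocks_mul]
        simp only [Matrix.zero_mul, Matrix.mul_zero, add_zero, zero_add, Matrix.one_mul,
          Matrix.mul_one, Matrix.neg_mul, Matrix.mul_neg, neg_neg, neg_zero]
    have hqKmem : qK ∈ MagEnd φ ρhat := by
      rw [hmem]
      constructor
      · intro h
        simp only [hqK, hDmdef]
        rw [Wig.blocks_mul, Wig.blocks_mul]
        simp only [Matrix.zero_mul, Matrix.mul_zero, add_zero, zero_add,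
          Wig.smul_one_mul, Wig.mul_smul_one]
      · simp only [hqK, hJmdef]
        rw [Wig.conjMat_blocks, Wig.conjMat_zero, hcI, Wig.blocks_mul, Wig.blocks_mul]
        simp only [Matrix.zero_mul, Matrix.mul_zero, add_zero, zero_add, Matrix.one_mul,
          Matrix.mul_one, smul_zero, Wig.smul_one_mul, Wig.mul_smul_one, Matrix.mul_neg,
          Matrix.neg_mul, smul_neg, neg_smul, neg_neg, neg_zero]
    -- real scalars acting on complex matrices
    have hrsmul : ∀ (r : ℝ) (M : Matrix (Fin (n+n)) (Fin (n+n)) ℂ),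
        r • M = ((r : ℂ)) • M := by
      intro r M
      ext i j
      simp [Matrix.smul_apply, Complex.real_smul]
    have halg : ∀ r : ℝ, algebraMap ℝ (Matrix (Fin (n+n)) (Fin (n+n)) ℂ) r = ((r : ℂ)) • 1 := by
      intro r
      ext i j
      simp [Matrix.algebraMap_matrix_apply, Matrix.smul_apply, Matrix.one_apply,
        apply_ite ((r : ℂ) * ·)]
    -- the basis elements
    set eI : MagEnd φ ρhat := ⟨qI, hqImem⟩ with heI
    set eJ : MagEnd φ ρhat := ⟨qJ, hqJmem⟩ with heJ
    set eK : MagEnd φ ρhat := ⟨qK, hqKmem⟩ with heK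
    have hII : eI * eI = (-1 : ℝ) • 1 := by
      apply Subtype.ext
      rw [MulMemClass.coe_mul, SetLike.val_smul, OneMemClass.coe_one, hrsmul]
      simp only [heI, hqI]
      rw [Wig.blocks_mul]
      rw [show ((-1 : ℝ) : ℂ) • (1 : Matrix (Fin (n+n)) (Fin (n+n)) ℂ) = -1 by
        push_cast; rw [neg_smul, one_smul], ← Wig.blocks_one, Wig.blocks_neg]
      simp only [Matrix.zero_mul, Matrix.mul_zero, add_zero, zero_add,
        Wig.smul_one_mul, Wig.mul_smul_one, smul_smul, Complex.I_mul_I, neg_mul, mul_neg,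
        neg_neg, neg_smul, one_smul, neg_zero]
    have hJJq : eJ * eJ = (-1 : ℝ) • 1 := by
      apply Subtype.ext
      rw [MulMemClass.coe_mul, SetLike.val_smul, OneMemClass.coe_one, hrsmul]
      simp only [heJ, hqJ]
      rw [Wig.blocks_mul]
      rw [show ((-1 : ℝ) : ℂ) • (1 : Matrix (Fin (n+n)) (Fin (n+n)) ℂ) = -1 by
        push_cast; rw [neg_smul, one_smul], ← Wig.blocks_one, Wig.blocks_neg]
      simp only [Matrix.zero_mul, Matrix.mul_zero, add_zero, zero_add, Matrix.one_mul,
        Matrix.mul_one, Matrix.neg_mul, Matrix.mul_neg, neg_neg, neg_zero]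
    have hIJ : eI * eJ = eK := by
      apply Subtype.ext
      rw [MulMemClass.coe_mul]
      simp only [heI, heJ, heK, hqI, hqJ, hqK]
      rw [Wig.blocks_mul]
      simp only [Matrix.zero_mul, Matrix.mul_zero, add_zero, zero_add,
        Wig.smul_one_mul, Wig.mul_smul_one, Matrix.mul_neg, Matrix.neg_mul,
        smul_neg, neg_smul, neg_neg, neg_zero, Matrix.mul_one, Matrix.one_mul]
    have hJI : eJ * eI = -eK := by
      apply Subtype.ext
      rw [MulMemClass.coe_mul, NegMemClass.coe_neg]
      simp only [heI, heJ, heK, hqI, hqJ, hqK]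
      rw [Wig.blocks_mul, Wig.blocks_neg]
      simp only [Matrix.zero_mul, Matrix.mul_zero, add_zero, zero_add,
        Wig.smul_one_mul, Wig.mul_smul_one, Matrix.mul_neg, Matrix.neg_mul,
        smul_neg, neg_smul, neg_neg, neg_zero, Matrix.mul_one, Matrix.one_mul]
    let bas : QuaternionAlgebra.Basis (MagEnd φ ρhat) (-1 : ℝ) (0 : ℝ) (-1 : ℝ) :=
      ⟨eI, eJ, eK, by rw [hII, zero_smul, add_zero], hJJq, hIJ, by rw [hJI, zero_smul, zero_sub]⟩
    set F : Quaternion ℝ →ₐ[ℝ] MagEnd φ ρhat := bas.liftHom with hFd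
    have hFdef : ∀ q : Quaternion ℝ,
        F q = algebraMap ℝ (MagEnd φ ρhat) q.re + q.imI • eI + q.imJ • eJ + q.imK • eK := by
      intro q
      rfl
    have hFinj : Function.Injective F := by
      have hntM : Nontrivial (MagEnd φ ρhat) := by
        refine nontrivial_of_ne 1 0 ?_
        intro h
        have h1 := congrArg Subtype.val h
        rw [OneMemClass.coe_one, ZeroMemClass.coe_zero] at h1
        have h2 := congrFun (congrFun h1 (Fin.castAdd n i0)) (Fin.castAdd n i0)
        simp [Matrix.one_apply] at h2
      exact F.toRingHom.injective
    have hFsurj : Function.Surjective F := by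
      intro s
      obtain ⟨hs1, hs2⟩ := (hmem s.val).mp s.2
      obtain ⟨α, β, hab⟩ := Wig.mag_end_aux (fun g : φ.ker => ρ g) hirr Tm Ti hTi hTi2
        s.val hs1 hs2
      refine ⟨⟨α.re, α.im, β.re, β.im⟩, ?_⟩
      apply Subtype.ext
      rw [hFdef ⟨α.re, α.im, β.re, β.im⟩]
      rw [show ((⟨α.re, α.im, β.re, β.im⟩ : Quaternion ℝ).re) = α.re from rfl,
        show ((⟨α.re, α.im, β.re, β.im⟩ : Quaternion ℝ).imI) = α.im from rfl,
        show ((⟨α.re, α.im, β.re, β.im⟩ : Quaternion ℝ).imJ) = β.re from rfl,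
        show ((⟨α.re, α.im, β.re, β.im⟩ : Quaternion ℝ).imK) = β.im from rfl]
      rw [AddMemClass.coe_add, AddMemClass.coe_add, AddMemClass.coe_add,
        SetLike.val_smul, SetLike.val_smul, SetLike.val_smul,
        Subalgebra.coe_algebraMap, hab]
      simp only [heI, heJ, heK, hqI, hqJ, hqK]
      rw [halg, hrsmul, hrsmul, hrsmul]
      rw [show (1 : Matrix (Fin (n+n)) (Fin (n+n)) ℂ) = blocks 1 0 0 1 from Wig.blocks_one.symm]
      rw [Wig.blocks_smul, Wig.blocks_smul, Wig.blocks_smul, Wig.blocks_smul,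
        Wig.blocks_add, Wig.blocks_add, Wig.blocks_add]
      have hb11 : (α.re : ℂ) • (1 : Matrix (Fin n) (Fin n) ℂ) +
          (α.im : ℂ) • (Complex.I • 1) + (β.re : ℂ) • 0 + (β.im : ℂ) • 0 = α • 1 := by
        rw [smul_zero, smul_zero, add_zero, add_zero, smul_smul, ← add_smul,
          Complex.re_add_im]
      have hb12 : (α.re : ℂ) • (0 : Matrix (Fin n) (Fin n) ℂ) + (α.im : ℂ) • 0 +
          (β.re : ℂ) • 1 + (β.im : ℂ) • (Complex.I • 1) = β • 1 := by
        rw [smul_zero, smul_zero, zero_add, zero_add, smul_smul, ← add_smul,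
          Complex.re_add_im]
      have hb21 : (α.re : ℂ) • (0 : Matrix (Fin n) (Fin n) ℂ) + (α.im : ℂ) • 0 +
          (β.re : ℂ) • (-1) + (β.im : ℂ) • (Complex.I • 1) =
            (-(starRingEnd ℂ β)) • 1 := by
        rw [smul_zero, smul_zero, zero_add, zero_add, smul_neg, ← neg_smul, smul_smul,
          ← add_smul]
        congr 1
        apply Complex.ext <;> simp
      have hb22 : (α.re : ℂ) • (1 : Matrix (Fin n) (Fin n) ℂ) +
          (α.im : ℂ) • ((-Complex.I) • 1) + (β.re : ℂ) • 0 + (β.im : ℂ) • 0 =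
            (starRingEnd ℂ α) • 1 := by
        rw [smul_zero, smul_zero, add_zero, add_zero, smul_smul, ← add_smul]
        congr 1
        apply Complex.ext <;> simp
      rw [hb11, hb12, hb21, hb22]
    exact ⟨(AlgEquiv.ofBijective F ⟨hFinj, hFsurj⟩).symm⟩
  refine ⟨ρhat, ⟨hmag, hdiag, hJa, hirr2, hquat⟩, ?_⟩
  intro ρ' hmag' hdiag' hJa'
  funext g
  apply Units.ext
  by_cases hg : g ∈ φ.ker
  · exact (hdiag' ⟨g, hg⟩).trans (hdiag ⟨g, hg⟩).symm
  · have hgm : g * a⁻¹ * a = g := by group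
    have e1 := hmag' (g * a⁻¹) a
    have e2 := hmag (g * a⁻¹) a
    rw [hgm] at e1 e2
    have hd1 : (ρ' (g * a⁻¹) : Matrix (Fin (n + n)) (Fin (n + n)) ℂ) =
        blocks (ρ ⟨g * a⁻¹, hmul_inv_mem g hg⟩ : Matrix (Fin n) (Fin n) ℂ) 0 0
          (ρ ⟨g * a⁻¹, hmul_inv_mem g hg⟩ : Matrix (Fin n) (Fin n) ℂ) :=
      hdiag' ⟨g * a⁻¹, hmul_inv_mem g hg⟩
    have hd2 : (ρhat (g * a⁻¹) : Matrix (Fin (n + n)) (Fin (n + n)) ℂ) =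
        blocks (ρ ⟨g * a⁻¹, hmul_inv_mem g hg⟩ : Matrix (Fin n) (Fin n) ℂ) 0 0
          (ρ ⟨g * a⁻¹, hmul_inv_mem g hg⟩ : Matrix (Fin n) (Fin n) ℂ) :=
      hdiag ⟨g * a⁻¹, hmul_inv_mem g hg⟩
    rw [e1, e2, hd1, hd2, hJa', hJa]
end
end
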